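/- arXiv:1605.03530 — 11 statements merged into one kernel-verified Lean document; each statement's English description precedes it below -/
import Mathlib

section
/- Let 𝒟 be a 2-(|V|, r+1, λ) design with point set V, where r ≥ 2, admitting G ≤ Sym(V) as a (G,2)-point-transitive and G-block-transitive group of automorphisms, and suppose Ω = (σ,L)^G is a strongly feasible G-orbit on the set of flags of 𝒟. Set P := L ∖ {σ}, and let H ≤ G_σ be a subgroup that is transitive on V ∖ {σ}. Then: (1) Ξ(𝒟,Ω) is a single G-orbit on the set of ordered pairs of distinct flags in Ω, and it is self-paired; (2) P is an imprimitive block for the action of H on V ∖ {σ}; (3) for every τ ∈ P, the set P is invariant under the stabilizer H_τ (i.e., P is a union of H_τ-orbits, including the orbit {τ}). -/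
/-- The action of a permutation on a flag (σ, L). -/
def flagMap {V : Type*} [DecidableEq V] (g : Equiv.Perm V) (f : V × Finset V) :
    V × Finset V :=
  (g f.1, f.2.image ⇑g)

/-- The G-orbit of a flag. -/
def flagOrbit {V : Type*} [DecidableEq V] (G : Subgroup (Equiv.Perm V))
    (f : V × Finset V) : Set (V × Finset V) :=
  {f' | ∃ g ∈ G, f' = flagMap g f}

/-- A set Ω of flags is strongly feasible. -/
def StronglyFeasible {V : Type*} [DecidableEq V] (G : Subgroup (Equiv.Perm V))
    (Ω : Set (V × Finset V)) : Prop :=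
  (∀ σ : V, 2 ≤ Set.ncard {f ∈ Ω | f.1 = σ}) ∧
  (∀ f ∈ Ω, ∀ x ∈ f.2, x ≠ f.1 → ∀ y ∈ f.2, y ≠ f.1 →
    ∃ g ∈ G, g f.1 = f.1 ∧ f.2.image ⇑g = f.2 ∧ g x = y) ∧
  (∀ f ∈ Ω, ∀ f' ∈ Ω, f.1 = f'.1 → f ≠ f' → f.2 ∩ f'.2 = {f.1})

/-- Ξ(𝒟,Ω): the set of ordered pairs ((σ,L),(τ,N)) of flags of Ω with σ ≠ τ and
σ, τ ∈ L ∩ N. -/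
def Xi {V : Type*} (Ω : Set (V × Finset V)) :
    Set ((V × Finset V) × (V × Finset V)) :=
  {pq | pq.1 ∈ Ω ∧ pq.2 ∈ Ω ∧ pq.1.1 ≠ pq.2.1 ∧ pq.1.1 ∈ pq.2.2 ∧ pq.2.1 ∈ pq.1.2}

/-- Lemma 2.4: with 𝒟 a (G,2)-point-transitive, G-block-transitive 2-(|V|,r+1,λ) design
(r ≥ 2) and Ω = (σ,L)^G a strongly feasible G-orbit on its flags, P := L ∖ {σ}, and
H ≤ G_σ transitive on V ∖ {σ}: (1) Ξ(𝒟,Ω) is a self-paired G-orbit on the set of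
ordered pairs of distinct flags in Ω; (2) P is an imprimitive block of H on V ∖ {σ};
(3) P is invariant under H_τ for every τ ∈ P. -/
theorem stmt_1 {V : Type*} [Fintype V] [DecidableEq V]
    (r lam : ℕ) (hr : 2 ≤ r)
    (B : Finset (Finset V))
    (hsize : ∀ L ∈ B, L.card = r + 1)
    (hdesign : ∀ x y : V, x ≠ y → (B.filter fun L => x ∈ L ∧ y ∈ L).card = lam)
    (G : Subgroup (Equiv.Perm V))
    (h2trans : ∀ x y x' y' : V, x ≠ y → x' ≠ y' → ∃ g ∈ G, g x = x' ∧ g y = y')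
    (hBinv : ∀ g ∈ G, ∀ L ∈ B, L.image ⇑g ∈ B)
    (hBtrans : ∀ L ∈ B, ∀ N ∈ B, ∃ g ∈ G, L.image ⇑g = N)
    (σ : V) (L : Finset V) (hLB : L ∈ B) (hσL : σ ∈ L)
    (hSF : StronglyFeasible G (flagOrbit G (σ, L)))
    (H : Subgroup (Equiv.Perm V)) (hHG : H ≤ G)
    (hHfix : ∀ h ∈ H, h σ = σ)
    (hHtrans : ∀ x y : V, x ≠ σ → y ≠ σ → ∃ h ∈ H, h x = y) :
    -- (1) Ξ is a self-paired G-orbit on the ordered pairs of distinct flags of Ω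
    (Xi (flagOrbit G (σ, L))).Nonempty ∧
    (∀ pq ∈ Xi (flagOrbit G (σ, L)), ∀ g ∈ G,
      (flagMap g pq.1, flagMap g pq.2) ∈ Xi (flagOrbit G (σ, L))) ∧
    (∀ pq ∈ Xi (flagOrbit G (σ, L)), ∀ pq' ∈ Xi (flagOrbit G (σ, L)),
      ∃ g ∈ G, (flagMap g pq.1, flagMap g pq.2) = pq') ∧
    (∀ pq ∈ Xi (flagOrbit G (σ, L)), (pq.2, pq.1) ∈ Xi (flagOrbit G (σ, L))) ∧
    -- (2) P = L ∖ {σ} is an imprimitive block of H on V ∖ {σ}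
    (∀ h ∈ H, (L \ {σ}).image ⇑h = L \ {σ} ∨
      ((L \ {σ}).image ⇑h) ∩ (L \ {σ}) = ∅) ∧
    -- (3) P is invariant under H_τ for each τ ∈ P
    (∀ τ ∈ L \ {σ}, ∀ h ∈ H, h τ = τ → (L \ {σ}).image ⇑h = L \ {σ}) := by
  classical
  set Ω := flagOrbit G (σ, L) with hΩ
  -- Ω is closed under the G-action
  have hclosed : ∀ f ∈ Ω, ∀ g ∈ G, flagMap g f ∈ Ω := by
    rintro f ⟨g0, hg0, rfl⟩ g hg
    exact ⟨g * g0, mul_mem hg hg0, by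
      simp [flagMap, Finset.image_image, Function.comp]⟩
  have hLΩ : (σ, L) ∈ Ω := ⟨1, one_mem G, by simp [flagMap]⟩
  -- a point of L other than σ
  have hcard : 2 ≤ L.card := by rw [hsize L hLB]; omega
  obtain ⟨τ0, hτ0L, hτ0σ⟩ : ∃ t ∈ L, t ≠ σ := by
    by_contra hcon
    push_neg at hcon
    have : L ⊆ {σ} := fun x hx => Finset.mem_singleton.2 (hcon x hx)
    have := Finset.card_le_card this
    simp at this; omega
  -- existence: for a ≠ b there is a flag (a, N) ∈ Ω with b ∈ N
  have hexist : ∀ a b : V, a ≠ b → ∃ N, (a, N) ∈ Ω ∧ b ∈ N := by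
    intro a b hab
    obtain ⟨g, hg, hg1, hg2⟩ := h2trans σ τ0 a b (Ne.symm hτ0σ) hab
    exact ⟨L.image ⇑g, ⟨g, hg, by simp [flagMap, hg1]⟩,
      Finset.mem_image.2 ⟨τ0, hτ0L, hg2⟩⟩
  -- uniqueness: two flags of Ω with the same point, sharing another point, are equal
  have huniq : ∀ f ∈ Ω, ∀ f' ∈ Ω, f.1 = f'.1 → ∀ t, t ∈ f.2 → t ∈ f'.2 →
      t ≠ f.1 → f = f' := by
    intro f hf f' hf' h1 t ht ht' htne
    by_contra hne
    have := hSF.2.2 f hf f' hf' h1 hne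
    have : t ∈ f.2 ∩ f'.2 := Finset.mem_inter.2 ⟨ht, ht'⟩
    rw [hSF.2.2 f hf f' hf' h1 hne] at this
    exact htne (Finset.mem_singleton.1 this)
  refine ⟨?_, ?_, ?_, ?_, ?_, ?_⟩
  · -- (1a) nonempty
    obtain ⟨N, hNΩ, hσN⟩ := hexist τ0 σ hτ0σ
    exact ⟨((σ, L), (τ0, N)), hLΩ, hNΩ, Ne.symm hτ0σ, hσN, hτ0L⟩
  · -- (1b) G-invariance
    rintro ⟨⟨a, M⟩, ⟨b, N⟩⟩ ⟨hM, hN, hab, haN, hbM⟩ g hg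
    refine ⟨hclosed _ hM g hg, hclosed _ hN g hg, ?_, ?_, ?_⟩
    · simpa [flagMap] using fun h => hab (g.injective h)
    · exact Finset.mem_image.2 ⟨a, haN, rfl⟩
    · exact Finset.mem_image.2 ⟨b, hbM, rfl⟩
  · -- (1c) transitivity
    rintro ⟨⟨a, M⟩, ⟨b, N⟩⟩ ⟨hM, hN, hab, haN, hbM⟩
      ⟨⟨a', M'⟩, ⟨b', N'⟩⟩ ⟨hM', hN', hab', haN', hbM'⟩
    obtain ⟨g, hg, hg1, hg2⟩ := h2trans a b a' b' hab hab'
    have h1 : flagMap g (a, M) = (a', M') := by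
      have hmem : flagMap g (a, M) ∈ Ω := hclosed _ hM g hg
      have : flagMap g (a, M) = (a', M.image ⇑g) := by simp [flagMap, hg1]
      rw [this] at hmem ⊢
      have hb' : b' ∈ M.image ⇑g := Finset.mem_image.2 ⟨b, hbM, hg2⟩
      exact huniq _ hmem _ hM' rfl b' hb' hbM' (Ne.symm hab')
    have h2 : flagMap g (b, N) = (b', N') := by
      have hmem : flagMap g (b, N) ∈ Ω := hclosed _ hN g hg
      have : flagMap g (b, N) = (b', N.image ⇑g) := by simp [flagMap, hg2]
      rw [this] at hmem ⊢
      have ha' : a' ∈ N.image ⇑g := Finset.mem_image.2 ⟨a, haN, hg1⟩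
      exact huniq _ hmem _ hN' rfl a' ha' haN' hab'
    exact ⟨g, hg, by rw [h1, h2]⟩
  · -- (1d) self-paired
    rintro ⟨⟨a, M⟩, ⟨b, N⟩⟩ ⟨hM, hN, hab, haN, hbM⟩
    exact ⟨hN, hM, Ne.symm hab, hbM, haN⟩
  · -- (2) block property
    intro h hh
    by_cases hmeet : (((L \ {σ}).image ⇑h) ∩ (L \ {σ})).Nonempty
    · left
      obtain ⟨t, ht⟩ := hmeet
      rw [Finset.mem_inter, Finset.mem_image] at ht
      obtain ⟨⟨s, hs, hst⟩, htL⟩ := ht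
      rw [Finset.mem_sdiff, Finset.mem_singleton] at hs htL
      have hhG : (h : Equiv.Perm V) ∈ G := hHG hh
      have hmem : flagMap h (σ, L) ∈ Ω := hclosed _ hLΩ h hhG
      have heq : flagMap h (σ, L) = (σ, L.image ⇑h) := by
        simp [flagMap, hHfix h hh]
      rw [heq] at hmem
      have htLh : t ∈ L.image ⇑h := Finset.mem_image.2 ⟨s, hs.1, hst⟩
      have := huniq _ hmem _ hLΩ rfl t htLh htL.1 htL.2
      have hLL : L.image ⇑h = L := congrArg Prod.snd this
      rw [Finset.image_sdiff _ _ h.injective, hLL]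
      congr 1
      simp [hHfix h hh]
    · right
      exact Finset.not_nonempty_iff_eq_empty.1 hmeet
  · -- (3) stabilizer invariance
    intro τ hτ h hh hhτ
    have hhG : (h : Equiv.Perm V) ∈ G := hHG hh
    have hmem : flagMap h (σ, L) ∈ Ω := hclosed _ hLΩ h hhG
    have heq : flagMap h (σ, L) = (σ, L.image ⇑h) := by
      simp [flagMap, hHfix h hh]
    rw [heq] at hmem
    rw [Finset.mem_sdiff, Finset.mem_singleton] at hτ
    have hτLh : τ ∈ L.image ⇑h := Finset.mem_image.2 ⟨τ, hτ.1, hhτ⟩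
    have := huniq _ hmem _ hLΩ rfl τ hτLh hτ.1 hτ.2
    have hLL : L.image ⇑h = L := congrArg Prod.snd this
    rw [Finset.image_sdiff _ _ h.injective, hLL]
    congr 1
    simp [hHfix h hh]
end

section
/- Let ℓ be a nonnegative integer and q > 2 a prime power such that 3 divides q+1. (a) If ℓ(q²−1)/3 + q divides q³, then ℓ = 0 or ℓ = 3q. (b) If ℓ(q²−1)/3 + 1 divides q³, then ℓ = 0 or ℓ = 3. -/
/-- Key contradiction lemma: for q = 3d+5, m = 3d²+10d+8, the equation
l*k*m + l + q*k = 3*q has no solution with l, k ≥ 1. -/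
lemma stmt_3_aux (d m l k : ℕ) (hm : m = 3*d^2 + 10*d + 8)
    (hl : 1 ≤ l) (hk : 1 ≤ k)
    (heq : l*k*m + l + (3*d+5)*k = 3*(3*d+5)) : False := by
  have h1 : m ≤ l*k*m := Nat.le_mul_of_pos_left m (Nat.mul_pos hl hk)
  have h2 : (3*d+5) ≤ (3*d+5)*k := Nat.le_mul_of_pos_right _ hk
  have hd1 : 3*d^2 + 4*d ≤ 1 := by linarith
  have hd : d = 0 := by nlinarith
  subst hd
  norm_num at hm heq
  subst hm
  obtain ⟨t, ht⟩ : ∃ t, l*k = t := ⟨_, rfl⟩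
  have h3 : l ≤ t := ht ▸ Nat.le_mul_of_pos_right l hk
  have h4 : k ≤ t := ht ▸ Nat.le_mul_of_pos_left k hl
  rw [ht] at heq
  have ht1 : t ≤ 1 := by omega
  interval_cases t <;> omega

/-- Lemma 2.5: Let ℓ be a nonnegative integer and q > 2 a prime power such that 3 ∣ (q+1).
(a) If (ℓ(q²-1)/3 + q) ∣ q³, then ℓ = 0 or 3q; (b) if (ℓ(q²-1)/3 + 1) ∣ q³, then ℓ = 0 or 3. -/
theorem stmt_3 (q : ℕ) (hq : IsPrimePow q) (hq2 : 2 < q) (h3 : 3 ∣ q + 1) (l : ℕ) :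
    ((l * (q ^ 2 - 1) / 3 + q ∣ q ^ 3) → l = 0 ∨ l = 3 * q) ∧
    ((l * (q ^ 2 - 1) / 3 + 1 ∣ q ^ 3) → l = 0 ∨ l = 3) := by
  obtain ⟨d, rfl⟩ : ∃ d, q = 3*d + 5 := by
    obtain ⟨c, hc⟩ := h3
    exact ⟨c - 2, by omega⟩
  clear hq hq2 h3
  obtain ⟨m, hm⟩ : ∃ m, m = 3*d^2 + 10*d + 8 := ⟨_, rfl⟩
  have hm0 : 0 < m := by rw [hm]; linarith [Nat.zero_le (3*d^2 + 10*d)]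
  have hm1 : 1 < m := by rw [hm]; linarith [Nat.zero_le (3*d^2 + 10*d)]
  have hqm : 3*d + 5 < m := by rw [hm]; linarith [Nat.zero_le (3*d^2)]
  have hpow : (3*d+5)^2 - 1 = 3*m := by
    rw [hm, show (3*d+5)^2 = 3*(3*d^2+10*d+8) + 1 from by ring]
    simp
  have hdiv : l * (3*m) / 3 = l * m := by
    rw [show l*(3*m) = 3*(l*m) from by ring]
    exact Nat.mul_div_cancel_left _ (by norm_num)
  have hcop : Nat.gcd (3*d+5) m = 1 := by
    have h1 : Nat.gcd (3*d+5) m ∣ (3*d+5)*(3*d+5) := (Nat.gcd_dvd_left _ _).mul_left _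
    have h2 : Nat.gcd (3*d+5) m ∣ 3*m := (Nat.gcd_dvd_right _ _).mul_left 3
    have h3 : (3*d+5)*(3*d+5) = 3*m + 1 := by rw [hm]; ring
    have h4 := Nat.dvd_sub h1 h2
    rw [h3, Nat.add_sub_cancel_left] at h4
    exact Nat.dvd_one.mp h4
  constructor
  · -- part (a)
    intro h
    rw [hpow, hdiv] at h
    obtain ⟨e, he⟩ := h
    have key : (l*m + (3*d+5)) * e = 3*(3*d+5)*m + (3*d+5) := by
      rw [← he, hm]; ring
    have h2 : (3*d+5)*e + (l*e)*m = (3*d+5) + (3*(3*d+5))*m := by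
      calc (3*d+5)*e + (l*e)*m = (l*m + (3*d+5)) * e := by ring
        _ = 3*(3*d+5)*m + (3*d+5) := key
        _ = (3*d+5) + (3*(3*d+5))*m := by ring
    have hmod1 : ((3*d+5)*e) % m = ((3*d+5)*1) % m := by
      rw [Nat.mul_one]
      calc ((3*d+5)*e) % m = ((3*d+5)*e + (l*e)*m) % m :=
            (Nat.add_mul_mod_self_right _ _ _).symm
        _ = ((3*d+5) + (3*(3*d+5))*m) % m := by rw [h2]
        _ = (3*d+5) % m := Nat.add_mul_mod_self_right _ _ _
    have hme : e ≡ 1 [MOD m] := Nat.ModEq.cancel_left_of_coprime (Nat.Coprime.symm hcop) hmod1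
    have hmod2 : e % m = 1 := by
      have := hme
      unfold Nat.ModEq at this
      rwa [Nat.mod_eq_of_lt hm1] at this
    obtain ⟨k, hk⟩ : ∃ k, e = m*k + 1 := by
      have hdm := Nat.div_add_mod e m
      rw [hmod2] at hdm
      exact ⟨e / m, hdm.symm⟩
    have hmul : m * (l*k*m + l + (3*d+5)*k) + (3*d+5)
        = m * (3*(3*d+5)) + (3*d+5) := by
      calc m * (l*k*m + l + (3*d+5)*k) + (3*d+5)
          = (l*m + (3*d+5)) * (m*k + 1) := by ring
        _ = (l*m + (3*d+5)) * e := by rw [← hk]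
        _ = 3*(3*d+5)*m + (3*d+5) := key
        _ = m * (3*(3*d+5)) + (3*d+5) := by ring
    have heq : l*k*m + l + (3*d+5)*k = 3*(3*d+5) :=
      Nat.eq_of_mul_eq_mul_left hm0 (Nat.add_right_cancel hmul)
    rcases Nat.eq_zero_or_pos k with rfl | hkpos
    · right; simpa using heq
    rcases Nat.eq_zero_or_pos l with rfl | hlpos
    · left; rfl
    · exact (stmt_3_aux d m l k hm hlpos hkpos heq).elim
  · -- part (b)
    intro h
    rw [hpow, hdiv] at h
    obtain ⟨e, he⟩ := h
    have key : (l*m + 1) * e = 3*(3*d+5)*m + (3*d+5) := by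
      rw [← he, hm]; ring
    have h2 : e + (l*e)*m = (3*d+5) + (3*(3*d+5))*m := by
      calc e + (l*e)*m = (l*m + 1) * e := by ring
        _ = 3*(3*d+5)*m + (3*d+5) := key
        _ = (3*d+5) + (3*(3*d+5))*m := by ring
    have hmod2 : e % m = 3*d+5 := by
      calc e % m = (e + (l*e)*m) % m := (Nat.add_mul_mod_self_right _ _ _).symm
        _ = ((3*d+5) + (3*(3*d+5))*m) % m := by rw [h2]
        _ = (3*d+5) % m := Nat.add_mul_mod_self_right _ _ _
        _ = 3*d+5 := Nat.mod_eq_of_lt hqm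
    obtain ⟨k, hk⟩ : ∃ k, e = m*k + (3*d+5) := by
      have hdm := Nat.div_add_mod e m
      rw [hmod2] at hdm
      exact ⟨e / m, hdm.symm⟩
    have hmul : m * (l*k*m + l*(3*d+5) + k) + (3*d+5)
        = m * (3*(3*d+5)) + (3*d+5) := by
      calc m * (l*k*m + l*(3*d+5) + k) + (3*d+5)
          = (l*m + 1) * (m*k + (3*d+5)) := by ring
        _ = (l*m + 1) * e := by rw [← hk]
        _ = 3*(3*d+5)*m + (3*d+5) := key
        _ = m * (3*(3*d+5)) + (3*d+5) := by ring
    have heq : l*k*m + l*(3*d+5) + k = 3*(3*d+5) :=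
      Nat.eq_of_mul_eq_mul_left hm0 (Nat.add_right_cancel hmul)
    rcases Nat.eq_zero_or_pos k with rfl | hkpos
    · right
      have : l*(3*d+5) = 3*(3*d+5) := by simpa using heq
      exact Nat.eq_of_mul_eq_mul_right (by omega) this
    rcases Nat.eq_zero_or_pos l with rfl | hlpos
    · left; rfl
    · have heq' : k*l*m + k + (3*d+5)*l = 3*(3*d+5) := by
        calc k*l*m + k + (3*d+5)*l = l*k*m + l*(3*d+5) + k := by ring
          _ = 3*(3*d+5) := heq
      exact (stmt_3_aux d m k l hm hkpos hlpos heq').elim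
end

section
/- Let ℓ and n be positive integers and q > 1 a prime power. If ℓ(q−1) + 1 divides qⁿ, then ℓ = (q^i − 1)/(q − 1) for some i ∈ {1, 2, …, n}. -/
/-!
Write `q = p ^ k`. A divisor of `q ^ n` is a power `p ^ j`, and `ℓ(q - 1) + 1 = p ^ j` says
`p ^ k - 1 ∣ p ^ j - 1`. Since `gcd (p ^ k - 1, p ^ j - 1) = p ^ gcd(k, j) - 1`, this forces
`k ∣ j`, so `ℓ(q - 1) + 1 = q ^ i` with `1 ≤ i ≤ n`.
-/

namespace Nat

lemma dvd_of_pow_sub_one_dvd_pow_sub_one {p k j : ℕ} (hp : 1 < p)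
    (h : p ^ k - 1 ∣ p ^ j - 1) : k ∣ j := by
  have hgcd : p ^ gcd k j - 1 = p ^ k - 1 := by
    rw [← pow_sub_one_gcd_pow_sub_one, gcd_eq_left h]
  have hk : gcd k j = k :=
    Nat.pow_right_injective hp <| sub_one_cancel (by positivity) (by positivity) hgcd
  exact hk ▸ gcd_dvd_right k j

lemma exists_eq_pow_of_dvd_pow_of_modEq_one {q m n : ℕ} (hq : IsPrimePow q)
    (hm : m ∣ q ^ n) (h : m ≡ 1 [MOD q - 1]) : ∃ a ≤ n, m = q ^ a := by
  obtain ⟨p, k, hp, hk, rfl⟩ := hq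
  have hp := Nat.prime_iff.mpr hp
  rw [← pow_mul] at hm
  obtain ⟨j, hjn, rfl⟩ := (dvd_prime_pow hp).mp hm
  have hdvd : p ^ k - 1 ∣ p ^ j - 1 :=
    (modEq_iff_dvd' (one_le_pow j p hp.pos)).mp h.symm
  obtain ⟨a, rfl⟩ := dvd_of_pow_sub_one_dvd_pow_sub_one hp.one_lt hdvd
  exact ⟨a, le_of_mul_le_mul_left hjn hk, pow_mul p k a⟩

end Nat

theorem stmt_4_general (q : ℕ) (hq : IsPrimePow q) (l n : ℕ) (hl : 0 < l)
    (hdvd : l * (q - 1) + 1 ∣ q ^ n) :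
    ∃ i, 1 ≤ i ∧ i ≤ n ∧ l = (q ^ i - 1) / (q - 1) := by
  have hq1 : 0 < q - 1 := Nat.sub_pos_of_lt hq.one_lt
  have hmod : l * (q - 1) + 1 ≡ 1 [MOD q - 1] := by simp [Nat.ModEq]
  obtain ⟨a, han, ha⟩ := Nat.exists_eq_pow_of_dvd_pow_of_modEq_one hq hdvd hmod
  have hla : l * (q - 1) = q ^ a - 1 := by omega
  refine ⟨a, Nat.one_le_iff_ne_zero.mpr ?_, han, ?_⟩
  · rintro rfl
    rw [pow_zero, Nat.sub_self] at hla
    exact Nat.mul_ne_zero hl.ne' hq1.ne' hla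
  · rw [← hla, Nat.mul_div_cancel l hq1]

/-- Lemma 2.6: Let ℓ and n be positive integers and q > 1 a prime power.
If (ℓ(q-1)+1) ∣ qⁿ, then ℓ = (qⁱ-1)/(q-1) for some i = 1, 2, …, n. -/
theorem stmt_4 (q : ℕ) (hq : IsPrimePow q) (hq1 : 1 < q) (l n : ℕ) (hl : 0 < l)
    (hn : 0 < n) (hdvd : l * (q - 1) + 1 ∣ q ^ n) :
    ∃ i, 1 ≤ i ∧ i ≤ n ∧ l = (q ^ i - 1) / (q - 1) :=
  stmt_4_general q hq l n hl hdvd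
end

section
/- Let q = 2^{2e+1} > 2 and σ: z ↦ z^{2^{e+1}}, and let V := {(η₁, η₂, η₃) ∈ F_q³ : η₃ = η₁η₂ + η₁^{σ+2} + η₂^{σ}} ∪ {∞}. For ξ ∈ F_q let t_{0,ξ} be the permutation of V fixing ∞ and mapping (η₁, η₂, η₃) to (η₁, η₂+ξ, η₃ + ξ^{σ} + ξη₁), and let w be the permutation of V interchanging ∞ and (0,0,0) and mapping (η₁, η₂, η₃) to (η₂/η₃, η₁/η₃, 1/η₃) for η₃ ≠ 0 (every point of V ∖ {∞, (0,0,0)} has η₃ ≠ 0). Then the subgroup of Sym(V) generated by {t_{0,ξ} : ξ ∈ F_q} ∪ {w} acts transitively on V. -/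
/-!
Write `ξ ^ σ` for `ξ ^ 2 ^ (e + 1)`; since `q = 2 ^ (2e+1)`, `σ ∘ σ` is squaring. It suffices to
reach every point of `V` from `∞`. The translation `t b` carries `(a, 0, a ^ (σ + 2))` to
`(a, b, ab + a ^ (σ + 2) + b ^ σ)`, and `w` carries `∞` to `(0, 0, 0)`. For `a ≠ 0` pick `ξ ≠ 0`
with `ξ = a ξ ^ σ`; it exists because `ξ ↦ ξ ^ σ / ξ` is injective on `Fˣ` (a fixed point of `σ`
satisfies `ξ ^ 2 = ξ`). Then `w (t ξ (w ∞)) = w (0, ξ, ξ ^ σ) = (a, 0, a ^ (σ + 2))`.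
-/

section SuzukiTwist

variable {F : Type*} [Field F] [Fintype F] {e : ℕ}

theorem pow_two_pow_succ_pow_two_pow_succ (hcard : Fintype.card F = 2 ^ (2 * e + 1)) (x : F) :
    (x ^ 2 ^ (e + 1)) ^ 2 ^ (e + 1) = x ^ 2 := by
  rw [← pow_mul, ← pow_add, show e + 1 + (e + 1) = 2 * e + 1 + 1 by ring, pow_succ, pow_mul,
    ← hcard, FiniteField.pow_card]

theorem exists_eq_mul_pow_two_pow_succ (hcard : Fintype.card F = 2 ^ (2 * e + 1)) {a : F}
    (ha : a ≠ 0) : ∃ ξ : F, ξ ≠ 0 ∧ ξ = a * ξ ^ 2 ^ (e + 1) := by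
  let φ : Fˣ →* Fˣ := powMonoidHom (2 ^ (e + 1)) / MonoidHom.id Fˣ
  have hφ : Function.Injective φ := by
    refine (injective_iff_map_eq_one φ).mpr fun u hu => Units.ext ?_
    have hfix : (u : F) ^ 2 ^ (e + 1) = u :=
      (div_eq_one_iff_eq u.ne_zero).mp (by simpa [φ] using congrArg Units.val hu)
    have hsq : (u : F) * u = u := by
      rw [← sq, ← pow_two_pow_succ_pow_two_pow_succ hcard, hfix, hfix]
    exact (mul_eq_left₀ u.ne_zero).mp hsq
  obtain ⟨u, hu⟩ := (Finite.injective_iff_surjective.mp hφ) (Units.mk0 a ha)⁻¹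
  have hu' : (u : F) ^ 2 ^ (e + 1) / u = a⁻¹ := by
    simpa [φ] using congrArg Units.val hu
  refine ⟨u, u.ne_zero, ?_⟩
  rw [div_eq_iff u.ne_zero] at hu'
  rw [hu', ← mul_assoc, mul_inv_cancel₀ ha, one_mul]

theorem pow_two_pow_succ_add_two_of_eq_mul (hcard : Fintype.card F = 2 ^ (2 * e + 1)) {a ξ : F}
    (hξ : ξ ≠ 0) (h : ξ = a * ξ ^ 2 ^ (e + 1)) :
    ξ / ξ ^ 2 ^ (e + 1) = a ∧ a ^ (2 ^ (e + 1) + 2) = 1 / ξ ^ 2 ^ (e + 1) := by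
  have hσ : ξ ^ 2 ^ (e + 1) ≠ 0 := pow_ne_zero _ hξ
  have ha : a = ξ / ξ ^ 2 ^ (e + 1) := by rw [eq_div_iff hσ, ← h]
  refine ⟨ha.symm, ?_⟩
  rw [ha, pow_add, div_pow, pow_two_pow_succ_pow_two_pow_succ hcard]
  field_simp

end SuzukiTwist

theorem Subgroup.exists_smul_eq_of_forall_exists_smul_eq {G α : Type*} [Group G] [MulAction G α]
    {H : Subgroup G} {V : Set α} {x : α} (h : ∀ v ∈ V, ∃ g ∈ H, g • x = v) :
    ∀ u ∈ V, ∀ v ∈ V, ∃ g ∈ H, g • u = v := by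
  intro u hu v hv
  obtain ⟨g, hg, rfl⟩ := h u hu
  obtain ⟨g', hg', rfl⟩ := h v hv
  exact ⟨g' * g⁻¹, mul_mem hg' (inv_mem hg), by rw [mul_smul, inv_smul_smul]⟩

theorem stmt_7_general {F : Type*} [Field F] [Fintype F] (e : ℕ)
    (hcard : Fintype.card F = 2 ^ (2 * e + 1))
    (V : Set (Option (F × F × F)))
    (hV : V = insert none {v : Option (F × F × F) | ∃ a b c : F,
        v = some (a, b, c) ∧ c = a * b + a ^ (2 ^ (e + 1) + 2) + b ^ (2 ^ (e + 1))})
    (t : F → Equiv.Perm (Option (F × F × F)))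
    (ht : ∀ (ξ a b c : F), t ξ (some (a, b, c)) =
        some (a, b + ξ, c + ξ ^ (2 ^ (e + 1)) + ξ * a))
    (w : Equiv.Perm (Option (F × F × F)))
    (hw_inf : w none = some (0, 0, 0))
    (hw : ∀ a b c : F, c ≠ 0 → w (some (a, b, c)) = some (b / c, a / c, 1 / c)) :
    ∀ u ∈ V, ∀ v ∈ V,
      ∃ g ∈ Subgroup.closure ({w} ∪ Set.range t), g u = v := by
  set H := Subgroup.closure ({w} ∪ Set.range t)
  have hwH : w ∈ H := Subgroup.subset_closure (Or.inl rfl)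
  have htH : ∀ ξ, t ξ ∈ H := fun ξ => Subgroup.subset_closure (Or.inr ⟨ξ, rfl⟩)
  have hbase : ∀ a, ∃ g ∈ H, g none = some (a, 0, a ^ (2 ^ (e + 1) + 2)) := by
    intro a
    by_cases ha : a = 0
    · exact ⟨w, hwH, by simp [hw_inf, ha]⟩
    obtain ⟨ξ, hξ, hξa⟩ := exists_eq_mul_pow_two_pow_succ hcard ha
    obtain ⟨h₁, h₃⟩ := pow_two_pow_succ_add_two_of_eq_mul hcard hξ hξa
    refine ⟨w * t ξ * w, mul_mem (mul_mem hwH (htH ξ)) hwH, ?_⟩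
    simp only [Equiv.Perm.mul_apply, hw_inf, ht, zero_add, mul_zero, add_zero]
    rw [hw _ _ _ (pow_ne_zero _ hξ), h₁, h₃, zero_div]
  refine Subgroup.exists_smul_eq_of_forall_exists_smul_eq (x := none) ?_
  rintro v hv
  rw [hV] at hv
  rcases hv with rfl | ⟨a, b, c, rfl, rfl⟩
  · exact ⟨1, one_mem H, rfl⟩
  obtain ⟨g, hg, hgx⟩ := hbase a
  refine ⟨t b * g, mul_mem (htH b) hg, ?_⟩
  rw [Equiv.Perm.smul_def, Equiv.Perm.mul_apply, hgx, ht]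
  congr 3 <;> ring

/-- From the proof of Lemma 2.14: let q = 2^{2e+1} > 2, σ : z ↦ z^{2^{e+1}}, and V the
Suzuki ovoid (with ∞ represented by `none`). Let t_{0,ξ} (ξ ∈ F_q) fix ∞ and map
(η₁,η₂,η₃) to (η₁, η₂+ξ, η₃+ξ^σ+ξη₁), and let w interchange ∞ and (0,0,0) and map
(η₁,η₂,η₃) to (η₂/η₃, η₁/η₃, 1/η₃) when η₃ ≠ 0. Then the subgroup of Sym(V) generated by
the t_{0,ξ} and w acts transitively on V. -/
theorem stmt_7 {F : Type*} [Field F] [Fintype F] (e : ℕ) (he : 1 ≤ e)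
    (hcard : Fintype.card F = 2 ^ (2 * e + 1))
    (V : Set (Option (F × F × F)))
    (hV : V = insert none {v : Option (F × F × F) | ∃ a b c : F,
        v = some (a, b, c) ∧ c = a * b + a ^ (2 ^ (e + 1) + 2) + b ^ (2 ^ (e + 1))})
    (t : F → Equiv.Perm (Option (F × F × F)))
    (ht_inf : ∀ ξ : F, t ξ none = none)
    (ht : ∀ (ξ a b c : F), t ξ (some (a, b, c)) =
        some (a, b + ξ, c + ξ ^ (2 ^ (e + 1)) + ξ * a))
    (w : Equiv.Perm (Option (F × F × F)))
    (hw_inf : w none = some (0, 0, 0))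
    (hw_zero : w (some (0, 0, 0)) = none)
    (hw : ∀ a b c : F, c ≠ 0 → w (some (a, b, c)) = some (b / c, a / c, 1 / c)) :
    ∀ u ∈ V, ∀ v ∈ V,
      ∃ g ∈ Subgroup.closure ({w} ∪ Set.range t), g u = v :=
  stmt_7_general e hcard V hV t ht w hw_inf hw
end

section
/- Let q = 3^{2e+1} (e ≥ 0) and let σ denote the field automorphism z ↦ z^{3^{e+1}} of F_q. For κ ∈ F_q^× define n_κ : F_q³ → F_q³ by (η₁, η₂, η₃) ↦ (κη₁, κ^{σ+1}η₂, κ^{σ+2}η₃). Then for every (η₁, η₂, η₃) ∈ F_q³ ∖ {(0,0,0)}, the orbit of (η₁, η₂, η₃) under the group {n_κ : κ ∈ F_q^×} has cardinality q − 1 if η₁ ≠ 0 or η₃ ≠ 0, and has cardinality (q−1)/2 if η₁ = η₃ = 0. -/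
/-- Lemma 2.16 (orbit lengths for the Ree groups): let q = 3^{2e+1},
σ : z ↦ z^{3^{e+1}} and n_κ : (η₁,η₂,η₃) ↦ (κη₁, κ^{σ+1}η₂, κ^{σ+2}η₃) for κ ∈ F_q^×.
For (η₁,η₂,η₃) ≠ (0,0,0), the orbit under {n_κ : κ ∈ F_q^×} has cardinality q-1
if η₁ ≠ 0 or η₃ ≠ 0, and cardinality (q-1)/2 if η₁ = η₃ = 0. -/
theorem stmt_8 {F : Type*} [Field F] [Fintype F] (e : ℕ)
    (hcard : Fintype.card F = 3 ^ (2 * e + 1))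
    (x y z : F) (h0 : (x, y, z) ≠ (0, 0, 0)) :
    ((x ≠ 0 ∨ z ≠ 0) →
      Set.ncard {p : F × F × F | ∃ κ : F, κ ≠ 0 ∧
          p = (κ * x, κ ^ (3 ^ (e + 1) + 1) * y, κ ^ (3 ^ (e + 1) + 2) * z)} =
        3 ^ (2 * e + 1) - 1) ∧
    (x = 0 → z = 0 →
      Set.ncard {p : F × F × F | ∃ κ : F, κ ≠ 0 ∧
          p = (κ * x, κ ^ (3 ^ (e + 1) + 1) * y, κ ^ (3 ^ (e + 1) + 2) * z)} =
        (3 ^ (2 * e + 1) - 1) / 2) := by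
  set n := 3 ^ (e + 1) with hn
  set q := 3 ^ (2 * e + 1) with hqdef
  have hq2 : 3 ≤ q := by
    calc 3 = 3 ^ 1 := by norm_num
    _ ≤ q := Nat.pow_le_pow_right (by norm_num) (by omega)
  have hn3 : 3 ≤ n := by
    calc 3 = 3 ^ 1 := by norm_num
    _ ≤ n := Nat.pow_le_pow_right (by norm_num) (by omega)
  have hnn : n * n = 3 * q := by
    rw [hn, hqdef, ← pow_add, show e + 1 + (e + 1) = 2 * e + 1 + 1 by omega, pow_succ, mul_comm]
  have hqu : Nat.card Fˣ = q - 1 := by rw [Nat.card_units, Nat.card_eq_fintype_card, hcard]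
  have hu1 : ∀ u : Fˣ, u ^ (q - 1) = 1 := fun u => by rw [← hqu]; exact pow_card_eq_one'
  obtain ⟨m, hm⟩ : ∃ m, n = m + 3 := ⟨n - 3, by omega⟩
  obtain ⟨r, hr⟩ : ∃ r, q = r + 3 := ⟨q - 3, by omega⟩
  -- key lemma A: u^(n+2)=1 → u = 1
  have hA : ∀ u : Fˣ, u ^ (n + 2) = 1 → u = 1 := by
    intro u h
    have h1 : u ^ ((n + 2) * (n - 2)) = 1 := by rw [pow_mul, h, one_pow]
    have harith : (n + 2) * (n - 2) + 1 = 3 * (q - 1) := by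
      rw [hm, hr] at hnn ⊢
      simp only [Nat.add_sub_cancel, show m + 3 - 2 = m + 1 by omega,
        show r + 3 - 1 = r + 2 by omega]
      nlinarith [hnn]
    have h2 : u ^ ((n + 2) * (n - 2) + 1) = 1 := by
      rw [harith, mul_comm, pow_mul, hu1, one_pow]
    rw [pow_succ, h1, one_mul] at h2
    exact h2
  -- key lemma B: u^(n+1)=1 → u^2 = 1
  have hB : ∀ u : Fˣ, u ^ (n + 1) = 1 → u ^ 2 = 1 := by
    intro u h
    have h1 : u ^ ((n + 1) * (n - 1)) = 1 := by rw [pow_mul, h, one_pow]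
    have harith : (n + 1) * (n - 1) = 3 * (q - 1) + 2 := by
      rw [hm, hr] at hnn ⊢
      simp only [show m + 3 - 1 = m + 2 by omega, show r + 3 - 1 = r + 2 by omega]
      nlinarith [hnn]
    rw [harith, pow_add, mul_comm 3, pow_mul, hu1, one_pow, one_mul] at h1
    exact h1
  -- -1 ≠ 1
  have hchar : (-1 : F) ≠ 1 := by
    intro hc
    have h2 : ringChar F = 2 := neg_one_eq_one_iff.mp hc
    haveI : CharP F 2 := h2 ▸ ringChar.charP F
    obtain ⟨nn, hp, hcard2⟩ := FiniteField.card F 2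
    have h2d : (2 : ℕ) ∣ q := by rw [← hcard, hcard2]; exact dvd_pow_self 2 nn.pos.ne'
    have h3d := Nat.Prime.dvd_of_dvd_pow Nat.prime_two (hqdef ▸ h2d)
    omega
  have hneg : (-1 : Fˣ) ≠ 1 := fun hc => hchar (by simpa using congrArg Units.val hc)
  have hpm : ∀ u : Fˣ, u ^ 2 = 1 → u = 1 ∨ u = -1 := by
    intro u h
    have hval : (u : F) ^ 2 = 1 := by
      have := congrArg Units.val h
      simpa [Units.val_pow_eq_pow_val] using this
    have h' : ((u : F) - 1) * ((u : F) + 1) = 0 := by linear_combination hval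
    rcases mul_eq_zero.mp h' with h1 | h1
    · left; ext; simpa [sub_eq_zero] using h1
    · right; ext
      rw [Units.val_neg, Units.val_one]
      exact eq_neg_of_add_eq_zero_left h1
  constructor
  · -- orbit size q - 1
    intro hxz
    have hS : {p : F × F × F | ∃ κ : F, κ ≠ 0 ∧
          p = (κ * x, κ ^ (n + 1) * y, κ ^ (n + 2) * z)} =
        (fun κ : F => (κ * x, κ ^ (n + 1) * y, κ ^ (n + 2) * z)) '' {κ : F | κ ≠ 0} := by
      ext p; simp [eq_comm]
    rw [hS, Set.ncard_image_of_injOn]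
    · have h1 : ({0} : Set F).ncard + ({0}ᶜ : Set F).ncard = Nat.card F :=
        Set.ncard_add_ncard_compl _
      rw [Set.ncard_singleton, Nat.card_eq_fintype_card, hcard] at h1
      have : {κ : F | κ ≠ 0} = ({0}ᶜ : Set F) := rfl
      rw [this]
      omega
    · intro a ha b hb hab
      simp only [Set.mem_setOf_eq] at ha hb
      simp only [Prod.mk.injEq] at hab
      obtain ⟨h1, h2, h3⟩ := hab
      rcases hxz with hx | hz
      · exact mul_right_cancel₀ hx h1
      · have h3' : a ^ (n + 2) = b ^ (n + 2) := mul_right_cancel₀ hz h3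
        set ua := Units.mk0 a ha with hua
        set ub := Units.mk0 b hb with hub
        have hdiv : (ua / ub) ^ (n + 2) = 1 := by
          rw [div_pow, div_eq_one]
          ext
          simp only [Units.val_pow_eq_pow_val, hua, hub, Units.val_mk0]
          exact h3'
        have := hA _ hdiv
        have heq : ua = ub := by rwa [div_eq_one] at this
        have := congrArg Units.val heq
        simpa [hua, hub] using this
  · -- orbit size (q-1)/2
    intro hx hz
    subst hx; subst hz
    have hy : y ≠ 0 := by intro hy; exact h0 (by rw [hy])
    set φ : Fˣ →* Fˣ := powMonoidHom (n + 1) with hφ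
    have hker : (φ.ker : Set Fˣ) = {1, -1} := by
      ext u
      simp only [SetLike.mem_coe, MonoidHom.mem_ker, Set.mem_insert_iff,
        Set.mem_singleton_iff, hφ, powMonoidHom_apply]
      constructor
      · intro h
        exact hpm u (hB u h)
      · rintro (rfl | rfl)
        · exact one_pow _
        · have hodd : Odd n := hn ▸ Odd.pow ⟨1, by norm_num⟩
          refine Even.neg_one_pow ?_
          rcases hodd with ⟨k, hk⟩
          exact ⟨k + 1, by omega⟩
    have hkcard : Nat.card φ.ker = 2 := by
      have h1 : Nat.card ((φ.ker : Set Fˣ) : Type _) = 2 := by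
        rw [Nat.card_coe_set_eq, hker, Set.ncard_pair (Ne.symm hneg)]
      exact h1
    have htot : Nat.card Fˣ = Nat.card (Fˣ ⧸ φ.ker) * Nat.card φ.ker :=
      Subgroup.card_eq_card_quotient_mul_card_subgroup _
    have hiso : Nat.card (Fˣ ⧸ φ.ker) = Nat.card φ.range :=
      Nat.card_congr (QuotientGroup.quotientKerEquivRange φ).toEquiv
    have hrange : Nat.card φ.range * 2 = q - 1 := by
      rw [← hkcard, ← hiso, ← htot, hqu]
    have hS : {p : F × F × F | ∃ κ : F, κ ≠ 0 ∧
          p = (κ * 0, κ ^ (n + 1) * y, κ ^ (n + 2) * 0)} =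
        (fun u : Fˣ => ((0 : F), (u : F) * y, (0 : F))) '' (φ.range : Set Fˣ) := by
      ext p
      simp only [Set.mem_setOf_eq, Set.mem_image, SetLike.mem_coe, MonoidHom.mem_range,
        mul_zero, hφ, powMonoidHom_apply]
      constructor
      · rintro ⟨κ, hκ, rfl⟩
        exact ⟨(Units.mk0 κ hκ) ^ (n + 1), ⟨Units.mk0 κ hκ, rfl⟩,
          by simp [Units.val_pow_eq_pow_val]⟩
      · rintro ⟨u, ⟨v, rfl⟩, rfl⟩
        exact ⟨(v : F), v.ne_zero, by simp [Units.val_pow_eq_pow_val]⟩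
    rw [hS, Set.ncard_image_of_injOn]
    · rw [← Nat.card_coe_set_eq]
      have : Nat.card ((φ.range : Set Fˣ) : Type _) = Nat.card φ.range := rfl
      rw [this]
      omega
    · intro a _ b _ hab
      simp only [Prod.mk.injEq] at hab
      obtain ⟨-, h2, -⟩ := hab
      exact Units.ext (mul_right_cancel₀ hy h2)
end

section
/- Let p be a prime, q = p^d, H a subgroup of the multiplicative group F_q^×, x ∈ F_q^× with x ∉ H, and n ≥ 1 an integer. For i ≥ 0 set c_i := x^{(p^{ni}−1)/(p^n−1)} (so c_0 = 1). If j is the smallest positive integer such that c_j H equals one of the cosets c_0 H, c_1 H, …, c_{j−1} H, then c_j H = H. -/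
private lemma geom_div (a k : ℕ) (ha : 2 ≤ a) :
    (a ^ k - 1) / (a - 1) = ∑ t ∈ Finset.range k, a ^ t := by
  have key : ∀ k : ℕ, (∑ t ∈ Finset.range k, a ^ t) * (a - 1) = a ^ k - 1 := by
    intro k
    induction k with
    | zero => simp
    | succ k ih =>
      rw [Finset.sum_range_succ, add_mul, ih]
      have h1 : 1 ≤ a ^ k := Nat.one_le_pow _ _ (by omega)
      have h2 : a ^ (k + 1) = a ^ k * a := pow_succ a k
      have h3 : a ^ k ≤ a ^ (k + 1) := Nat.pow_le_pow_right (by omega) (by omega)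
      have h4 : a ^ k * (a - 1) = a ^ (k + 1) - a ^ k := by
        rw [Nat.mul_sub, ← pow_succ, mul_one]
      omega
  rw [← key k, Nat.mul_div_cancel _ (by omega : 0 < a - 1)]

/-- Lemma 3.5: let H ≤ F_q^× (q = p^d), x ∈ F_q^× ∖ H, and δ : z ↦ z^{p^n}.
In the sequence H, x^{[δ,1]}H, x^{[δ,2]}H, …, if j is the smallest positive integer
such that x^{[δ,j]}H equals a previous item, then x^{[δ,j]}H = H, where
[δ,i] = (p^{ni}-1)/(p^n-1). -/
theorem stmt_9 {F : Type*} [Field F] [Fintype F] (p d : ℕ) (hp : p.Prime) (hd : 0 < d)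
    (hcard : Fintype.card F = p ^ d)
    (H : Subgroup Fˣ) (x : Fˣ) (hx : x ∉ H) (n : ℕ) (hn : 0 < n)
    (j : ℕ) (hj : 0 < j)
    (hrep : ∃ i < j,
      (QuotientGroup.mk (x ^ ((p ^ (n * j) - 1) / (p ^ n - 1))) : Fˣ ⧸ H) =
        QuotientGroup.mk (x ^ ((p ^ (n * i) - 1) / (p ^ n - 1))))
    (hmin : ∀ j', 0 < j' → j' < j →
      ¬ ∃ i < j',
        (QuotientGroup.mk (x ^ ((p ^ (n * j') - 1) / (p ^ n - 1))) : Fˣ ⧸ H) =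
          QuotientGroup.mk (x ^ ((p ^ (n * i) - 1) / (p ^ n - 1)))) :
    (QuotientGroup.mk (x ^ ((p ^ (n * j) - 1) / (p ^ n - 1))) : Fˣ ⧸ H) = 1 := by
  obtain ⟨i, hij, heq⟩ := hrep
  have hp2 : 2 ≤ p := hp.two_le
  have ha2 : 2 ≤ p ^ n := by
    calc 2 ≤ p := hp2
    _ = p ^ 1 := (pow_one p).symm
    _ ≤ p ^ n := Nat.pow_le_pow_right (by omega) hn
  have hexp : ∀ k, (p ^ (n * k) - 1) / (p ^ n - 1) = ∑ t ∈ Finset.range k, (p ^ n) ^ t := by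
    intro k; rw [pow_mul]; exact geom_div (p ^ n) k ha2
  have hmem : ∀ (y : Fˣ) (m : ℕ), y ^ p ^ m ∈ H → y ∈ H := by
    intro y m hy
    have hdvd : orderOf y ∣ p ^ d - 1 := by
      have h1 := orderOf_dvd_natCard y
      rwa [Nat.card_units, Nat.card_eq_fintype_card, hcard] at h1
    have hc : p.Coprime (p ^ d - 1) := by
      rw [Nat.Prime.coprime_iff_not_dvd hp]
      intro h
      have hpd : p ∣ p ^ d := dvd_pow_self p hd.ne'
      have h2 : 2 ≤ p ^ d := by
        calc 2 ≤ p := hp2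
        _ = p ^ 1 := (pow_one p).symm
        _ ≤ p ^ d := Nat.pow_le_pow_right (by omega) hd
      obtain ⟨u, hu⟩ := h; obtain ⟨v, hv⟩ := hpd
      have : p ∣ 1 := ⟨v - u, by rw [Nat.mul_sub, ← hu, ← hv]; omega⟩
      have := Nat.le_of_dvd one_pos this
      omega
    have hco : (p ^ m).Coprime (orderOf y) :=
      Nat.Coprime.pow_left _ (hc.coprime_dvd_right hdvd)
    obtain ⟨k, hk⟩ := exists_pow_eq_self_of_coprime hco
    rw [← hk]; exact pow_mem hy k
  rcases Nat.eq_zero_or_pos i with hi0 | hi0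
  · rw [heq, hi0]
    norm_num
  · exfalso
    apply hmin (j - i) (by omega) (by omega)
    refine ⟨0, by omega, ?_⟩
    have hsplit : (∑ t ∈ Finset.range j, (p ^ n) ^ t) =
        (∑ t ∈ Finset.range i, (p ^ n) ^ t) +
          (p ^ n) ^ i * ∑ t ∈ Finset.range (j - i), (p ^ n) ^ t := by
      have h1 := Finset.sum_range_add (fun t => (p ^ n) ^ t) i (j - i)
      rw [Nat.add_sub_cancel' hij.le] at h1
      rw [h1, Finset.mul_sum]
      congr 1
      refine Finset.sum_congr rfl fun t _ => ?_
      rw [pow_add]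
    have hxej : x ^ ((p ^ (n * j) - 1) / (p ^ n - 1)) =
        x ^ ((p ^ (n * i) - 1) / (p ^ n - 1)) *
          (x ^ ((p ^ (n * (j - i)) - 1) / (p ^ n - 1))) ^ p ^ (n * i) := by
      rw [hexp, hexp, hexp, hsplit, pow_add, mul_comm ((p ^ n) ^ i), pow_mul, pow_mul]
    have hH : (x ^ ((p ^ (n * i) - 1) / (p ^ n - 1)))⁻¹ *
        x ^ ((p ^ (n * j) - 1) / (p ^ n - 1)) ∈ H := by
      have h2 := QuotientGroup.eq.mp heq
      have h3 := inv_mem h2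
      simpa [mul_inv_rev, mul_comm] using h3
    rw [hxej, inv_mul_cancel_left] at hH
    have hfin : x ^ ((p ^ (n * (j - i)) - 1) / (p ^ n - 1)) ∈ H := hmem _ _ hH
    have h0 : (p ^ (n * 0) - 1) / (p ^ n - 1) = 0 := by norm_num
    rw [h0, pow_zero]
    rw [QuotientGroup.eq]
    simpa using hfin
end

section
/- Let p be a prime, q = p^d, and let G ≤ AΓL(1,q) act 2-transitively on F_q. Let s be the smallest positive integer such that t(a,s) ∈ G_0 for some a ∈ F_q^×, and m the smallest positive integer such that t(1,ms) ∈ G_0. Then: (a) if m = 1, then G_0 is the group generated by {t(a,0) : a ∈ F_q^×} together with t(1,s); conversely, if G_0 contains {t(a,0) : a ∈ F_q^×}, then m = 1; (b) if m > 1, then the multiplicative order of p^s modulo m(p^s − 1) equals m, and every prime divisor of m divides p^s − 1. -/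
/-- `scalarFrob G p a k` says that the map t(a,k) : z ↦ a·z^{p^k} belongs to G
(as a permutation of the field; such a map automatically fixes 0). -/
def scalarFrob {F : Type*} [Field F] (G : Subgroup (Equiv.Perm F)) (p : ℕ)
    (a : F) (k : ℕ) : Prop :=
  ∃ g ∈ G, ∀ z : F, g z = a * z ^ p ^ k

/-!
Write `t(a, k)` for `z ↦ a * z ^ p ^ k`, `e = p ^ s`, `S k = 1 + e + ⋯ + e ^ (k - 1)`, and let
`N` be the group of `a` with `t(a, 0) ∈ G`. Composing and dividing elements of `G₀` shows that their
exponents are multiples of `s` and that, for a fixed `t(a, s) ∈ G`, `t(b, k * s) ∈ G` exactly when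
`b ≡ a ^ S k` modulo `N`. By transitivity of `G₀` on `Fˣ` every class of `Fˣ ⧸ N` has this form.
These classes form the orbit of `1` under `x ↦ ā * x ^ e`, which first returns to `1` after `m`
steps, so `Fˣ ⧸ N` is cyclic of order `m`, generated by `ā`. Hence `t(1, k * s) ∈ G ↔ m ∣ S k`,
and `S k` runs through all residues modulo `m`. As `e ^ k - 1 = (e - 1) * S k`, the former says
that `e` has order `m` modulo `m * (e - 1)`. By the latter, if a prime `r ∣ m` did not divide
`e - 1`, some `S k` would be `≡ -1 / (e - 1)` modulo `r`, forcing `r ∣ e ^ k`, although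
`e ^ m ≡ 1` modulo `r`.
-/

open Finset Function

theorem Function.card_eq_minimalPeriod {α : Type*} {f : α → α} {x : α}
    (hx : x ∈ periodicPts f) (hf : ∀ y, ∃ n, f^[n] x = y) : Nat.card α = minimalPeriod f x := by
  have hbij : Bijective fun n : Fin (minimalPeriod f x) => f^[n] x := by
    refine ⟨fun i j h => Fin.ext (iterate_injOn_Iio_minimalPeriod i.2 j.2 h), fun y => ?_⟩
    obtain ⟨n, rfl⟩ := hf y
    exact ⟨⟨n % minimalPeriod f x, Nat.mod_lt _ (minimalPeriod_pos_of_mem_periodicPts hx)⟩,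
      iterate_mod_minimalPeriod_eq⟩
  simpa using (Nat.card_eq_of_bijective _ hbij).symm

theorem Function.minimalPeriod_eq_of_isLeast {α : Type*} {f : α → α} {x : α} {m : ℕ}
    (hm : IsLeast {k | 0 < k ∧ f^[k] x = x} m) : minimalPeriod f x = m :=
  le_antisymm (IsPeriodicPt.minimalPeriod_le hm.1.1 hm.1.2)
    (hm.2 ⟨IsPeriodicPt.minimalPeriod_pos hm.1.1 hm.1.2, iterate_minimalPeriod⟩)

section GeomSumOrbit

variable {Q : Type*} [Group Q] {u : Q} {e m : ℕ}

theorem orderOf_eq_of_isLeast_pow_geomSum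
    (hsurj : ∀ x, ∃ k, u ^ ∑ i ∈ range k, e ^ i = x)
    (hm : IsLeast {k | 0 < k ∧ u ^ ∑ i ∈ range k, e ^ i = 1} m) : orderOf u = m := by
  set φ : Q → Q := fun x => u * x ^ e
  have hφ : ∀ k, φ^[k] 1 = u ^ ∑ i ∈ range k, e ^ i := by
    intro k
    induction k with
    | zero => simp
    | succ k ih => rw [iterate_succ_apply', ih, geom_sum_succ, pow_succ', pow_mul']
  simp only [← hφ] at hsurj hm
  rw [orderOf_eq_card_of_forall_mem_zpowers,
    card_eq_minimalPeriod (mk_mem_periodicPts hm.1.1 hm.1.2) hsurj, minimalPeriod_eq_of_isLeast hm]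
  intro x
  obtain ⟨k, rfl⟩ := hsurj x
  rw [hφ]
  exact Subgroup.npow_mem_zpowers u _

theorem isLeast_dvd_geomSum_of_isLeast_pow_geomSum
    (hsurj : ∀ x, ∃ k, u ^ ∑ i ∈ range k, e ^ i = x)
    (hm : IsLeast {k | 0 < k ∧ u ^ ∑ i ∈ range k, e ^ i = 1} m) :
    IsLeast {k | 0 < k ∧ m ∣ ∑ i ∈ range k, e ^ i} m := by
  simpa only [← orderOf_eq_of_isLeast_pow_geomSum hsurj hm, orderOf_dvd_iff_pow_eq_one] using hm

theorem exists_geomSum_modEq_of_isLeast_pow_geomSum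
    (hsurj : ∀ x, ∃ k, u ^ ∑ i ∈ range k, e ^ i = x)
    (hm : IsLeast {k | 0 < k ∧ u ^ ∑ i ∈ range k, e ^ i = 1} m) (y : ℕ) :
    ∃ k, ∑ i ∈ range k, e ^ i ≡ y [MOD m] := by
  obtain ⟨k, hk⟩ := hsurj (u ^ y)
  exact ⟨k, orderOf_eq_of_isLeast_pow_geomSum hsurj hm ▸ pow_eq_pow_iff_modEq.1 hk⟩

end GeomSumOrbit

theorem ZMod.natCast_pow_eq_one_iff_dvd_geomSum {e m : ℕ} (he : 1 < e) (k : ℕ) :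
    ((e : ZMod (m * (e - 1))) ^ k = 1) ↔ m ∣ ∑ i ∈ range k, e ^ i := by
  obtain ⟨f, rfl⟩ : ∃ f, e = f + 1 := ⟨e - 1, by omega⟩
  rw [Nat.add_sub_cancel, ← Nat.cast_pow, ← geom_sum_mul_add, Nat.cast_add, Nat.cast_one,
    add_eq_right, ZMod.natCast_eq_zero_iff, Nat.mul_dvd_mul_iff_right (by omega)]

theorem orderOf_natCast_zmod_mul_sub_one {e m : ℕ} (he : 1 < e)
    (hm : IsLeast {k | 0 < k ∧ m ∣ ∑ i ∈ range k, e ^ i} m) :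
    orderOf (e : ZMod (m * (e - 1))) = m := by
  rw [orderOf_eq_iff hm.1.1]
  exact ⟨(ZMod.natCast_pow_eq_one_iff_dvd_geomSum he m).2 hm.1.2, fun k hkm hk h =>
    (hm.2 ⟨hk, (ZMod.natCast_pow_eq_one_iff_dvd_geomSum he k).1 h⟩).not_gt hkm⟩

theorem Nat.Prime.dvd_sub_one_of_forall_exists_geomSum_modEq {e m r : ℕ} (hr : r.Prime)
    (hrm : r ∣ m) (he : 1 ≤ e) (hm : m ∣ ∑ i ∈ range m, e ^ i) (hm0 : 0 < m)
    (hsurj : ∀ y, ∃ k, ∑ i ∈ range k, e ^ i ≡ y [MOD m]) : r ∣ e - 1 := by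
  have := Fact.mk hr
  have hgeom (k : ℕ) :
      ((e : ZMod r) - 1) * ((∑ i ∈ range k, e ^ i : ℕ) : ZMod r) = (e : ZMod r) ^ k - 1 := by
    push_cast
    rw [mul_comm, geom_sum_mul]
  by_contra hre
  have hne : (e : ZMod r) - 1 ≠ 0 := by
    rwa [← Nat.cast_one, ← Nat.cast_sub he, Ne, ZMod.natCast_eq_zero_iff]
  obtain ⟨k, hk⟩ := hsurj (-((e : ZMod r) - 1)⁻¹).val
  have hk' := (ZMod.natCast_eq_natCast_iff _ _ _).2 (hk.of_dvd hrm)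
  rw [ZMod.natCast_zmod_val] at hk'
  have hek : (e : ZMod r) ^ k = 0 := by
    have := hgeom k
    rw [hk', mul_neg, mul_inv_cancel₀ hne] at this
    linear_combination -this
  have hem : (e : ZMod r) ^ m = 1 := by
    have := hgeom m
    rw [(ZMod.natCast_eq_zero_iff _ _).2 (hrm.trans hm), mul_zero] at this
    linear_combination -this
  rw [eq_zero_of_pow_eq_zero hek, zero_pow_eq_one₀] at hem
  exact hm0.ne' hem

namespace scalarFrob

variable {F : Type*} [Field F] {G : Subgroup (Equiv.Perm F)} {p : ℕ} {a b c : F} {j k r : ℕ}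

theorem one_zero : scalarFrob G p 1 0 :=
  ⟨1, G.one_mem, by simp⟩

theorem comp (ha : scalarFrob G p a j) (hb : scalarFrob G p b k) :
    scalarFrob G p (b * a ^ p ^ k) (j + k) := by
  obtain ⟨g, hg, hga⟩ := ha
  obtain ⟨h, hh, hhb⟩ := hb
  refine ⟨h * g, G.mul_mem hh hg, fun z => ?_⟩
  rw [Equiv.Perm.mul_apply, hhb, hga, mul_pow, ← pow_mul, ← pow_add, mul_assoc]

theorem div (hb : scalarFrob G p b (j + r)) (hc : scalarFrob G p c j) (hc0 : c ≠ 0) :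
    scalarFrob G p (b / c ^ p ^ r) r := by
  obtain ⟨g, hg, hgb⟩ := hb
  obtain ⟨h, hh, hhc⟩ := hc
  refine ⟨g * h⁻¹, G.mul_mem hg (G.inv_mem hh), fun z => ?_⟩
  obtain ⟨w, rfl⟩ := h.surjective z
  rw [Equiv.Perm.mul_apply, Equiv.Perm.inv_def, Equiv.symm_apply_apply, hgb, hhc, mul_pow,
    ← pow_mul, ← pow_add]
  field_simp

theorem pow_geomSum (ha : scalarFrob G p a j) :
    ∀ k, scalarFrob G p (a ^ ∑ i ∈ range k, (p ^ j) ^ i) (k * j)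
  | 0 => by simpa using one_zero
  | k + 1 => by
    convert (pow_geomSum ha k).comp ha using 1
    · rw [geom_sum_succ, pow_succ', pow_mul']
    · ring

theorem mem_of_forall (ha : scalarFrob G p a k) {g : Equiv.Perm F} (hg : ∀ z, g z = a * z ^ p ^ k) :
    g ∈ G := by
  obtain ⟨g', hg', hg'a⟩ := ha
  convert hg'
  ext z
  rw [hg, hg'a]

end scalarFrob

section AffineGroup

variable {F : Type*} [Field F] {G : Subgroup (Equiv.Perm F)} {p : ℕ}

def scalarSubgroup (G : Subgroup (Equiv.Perm F)) (p : ℕ) : Subgroup Fˣ where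
  carrier := {x | scalarFrob G p x 0}
  one_mem' := scalarFrob.one_zero
  mul_mem' {x y} hx hy := by simpa [mul_comm] using hx.comp hy
  inv_mem' {x} hx := by simpa using scalarFrob.one_zero.div (j := 0) (r := 0) hx x.ne_zero

theorem mem_scalarSubgroup {x : Fˣ} : x ∈ scalarSubgroup G p ↔ scalarFrob G p x 0 :=
  Iff.rfl

theorem scalarFrob_iff_mk_eq {b c : Fˣ} {j : ℕ} (hc : scalarFrob G p c j) :
    scalarFrob G p b j ↔ (b : Fˣ ⧸ scalarSubgroup G p) = c := by
  rw [QuotientGroup.eq_iff_div_mem, mem_scalarSubgroup]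
  refine ⟨fun hb => ?_, fun h => ?_⟩
  · simpa using hb.div (r := 0) hc c.ne_zero
  · simpa using hc.comp h

theorem exists_forall_apply_eq_mul_pow (hp : p ≠ 0)
    (hAGL : ∀ g ∈ G, ∃ (a c : F) (k : ℕ), ∀ z : F, g z = a * z ^ p ^ k + c)
    {g : Equiv.Perm F} (hg : g ∈ G) (hg0 : g 0 = 0) : ∃ k, ∀ z, g z = g 1 * z ^ p ^ k := by
  obtain ⟨a, c, k, h⟩ := hAGL g hg
  have hc : c = 0 := by simpa [hp] using (h 0).symm.trans hg0
  exact ⟨k, fun z => by simp [h, hc]⟩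

theorem dvd_of_scalarFrob {s : ℕ}
    (hs : IsLeast {k | 0 < k ∧ ∃ a : F, a ≠ 0 ∧ scalarFrob G p a k} s)
    {b : F} {j : ℕ} (hb : scalarFrob G p b j) (hb0 : b ≠ 0) : s ∣ j := by
  obtain ⟨⟨hs0, a, ha0, ha⟩, hmin⟩ := hs
  rw [← Nat.div_add_mod' j s] at hb
  have hrem := hb.div (ha.pow_geomSum (j / s)) (pow_ne_zero _ ha0)
  by_contra hsj
  have hle := hmin ⟨Nat.pos_of_ne_zero (mt Nat.dvd_of_mod_eq_zero hsj), _,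
    div_ne_zero hb0 (pow_ne_zero _ (pow_ne_zero _ ha0)), hrem⟩
  exact (Nat.mod_lt j hs0).not_ge hle

theorem exists_eq_mul_pow_mul_of_apply_zero (hp : p ≠ 0)
    (hAGL : ∀ g ∈ G, ∃ (a c : F) (k : ℕ), ∀ z : F, g z = a * z ^ p ^ k + c)
    {s : ℕ} (hs : IsLeast {k | 0 < k ∧ ∃ a : F, a ≠ 0 ∧ scalarFrob G p a k} s)
    {g : Equiv.Perm F} (hg : g ∈ G) (hg0 : g 0 = 0) :
    ∃ (a : F) (k : ℕ), a ≠ 0 ∧ ∀ z : F, g z = a * z ^ p ^ (k * s) := by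
  obtain ⟨j, hj⟩ := exists_forall_apply_eq_mul_pow hp hAGL hg hg0
  have hg1 : g 1 ≠ 0 := hg0 ▸ g.injective.ne one_ne_zero
  obtain ⟨k, rfl⟩ := dvd_of_scalarFrob hs ⟨g, hg, hj⟩ hg1
  exact ⟨g 1, k, hg1, by simpa [mul_comm s k] using hj⟩

theorem scalarFrob_mul_of_scalarFrob_one (hcoef : ∀ x : F, x ≠ 0 → ∃ j, scalarFrob G p x j)
    {s : ℕ} (hs : IsLeast {k | 0 < k ∧ ∃ a : F, a ≠ 0 ∧ scalarFrob G p a k} s)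
    (h1 : scalarFrob G p 1 s) {b : F} (hb : b ≠ 0) (k : ℕ) : scalarFrob G p b (k * s) := by
  have h1k : ∀ k, scalarFrob G p 1 (k * s) := by simpa using h1.pow_geomSum
  obtain ⟨j, hj⟩ := hcoef b hb
  obtain ⟨l, rfl⟩ := dvd_of_scalarFrob hs hj hb
  rw [mul_comm] at hj
  have hb0 : scalarFrob G p b 0 := by simpa using hj.div (r := 0) (h1k l) one_ne_zero
  simpa using (h1k k).comp hb0

theorem exists_mk_pow_geomSum_eq (hcoef : ∀ x : F, x ≠ 0 → ∃ j, scalarFrob G p x j)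
    {s : ℕ} (hs : IsLeast {k | 0 < k ∧ ∃ a : F, a ≠ 0 ∧ scalarFrob G p a k} s)
    {u : Fˣ} (hu : scalarFrob G p u s) (x : Fˣ ⧸ scalarSubgroup G p) :
    ∃ k, (u : Fˣ ⧸ scalarSubgroup G p) ^ ∑ i ∈ range k, (p ^ s) ^ i = x := by
  obtain ⟨b, rfl⟩ := QuotientGroup.mk_surjective x
  obtain ⟨j, hj⟩ := hcoef b b.ne_zero
  obtain ⟨k, rfl⟩ := dvd_of_scalarFrob hs hj b.ne_zero
  have hc : scalarFrob G p ↑(u ^ ∑ i ∈ range k, (p ^ s) ^ i) (s * k) := by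
    simpa [mul_comm k s] using hu.pow_geomSum k
  exact ⟨k, by rw [← QuotientGroup.mk_pow, eq_comm, ← scalarFrob_iff_mk_eq hc]; exact hj⟩

theorem scalarFrob_one_mul_iff {s : ℕ} {u : Fˣ} (hu : scalarFrob G p u s) (k : ℕ) :
    scalarFrob G p 1 (k * s) ↔
      (u : Fˣ ⧸ scalarSubgroup G p) ^ ∑ i ∈ range k, (p ^ s) ^ i = 1 := by
  have hc : scalarFrob G p ↑(u ^ ∑ i ∈ range k, (p ^ s) ^ i) (k * s) := by
    simpa using hu.pow_geomSum k
  simpa [eq_comm] using scalarFrob_iff_mk_eq (b := 1) hc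

end AffineGroup

theorem stmt_11_general {F : Type*} [Field F] (p : ℕ) (hp : p.Prime)
    (G : Subgroup (Equiv.Perm F))
    (hAGL : ∀ g ∈ G, ∃ (a c : F) (k : ℕ), ∀ z : F, g z = a * z ^ p ^ k + c)
    (h2trans : ∀ x y x' y' : F, x ≠ y → x' ≠ y' → ∃ g ∈ G, g x = x' ∧ g y = y')
    (s : ℕ) (hs : IsLeast {k | 0 < k ∧ ∃ a : F, a ≠ 0 ∧ scalarFrob G p a k} s)
    (m : ℕ) (hm : IsLeast {k | 0 < k ∧ scalarFrob G p 1 (k * s)} m) :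
    (m = 1 → ∀ g : Equiv.Perm F, (g ∈ G ∧ g 0 = 0) ↔
        ∃ (a : F) (k : ℕ), a ≠ 0 ∧ ∀ z : F, g z = a * z ^ p ^ (k * s)) ∧
    ((∀ a : F, a ≠ 0 → scalarFrob G p a 0) → m = 1) ∧
    (1 < m → orderOf ((p ^ s : ℕ) : ZMod (m * (p ^ s - 1))) = m ∧
        ∀ r : ℕ, r.Prime → r ∣ m → r ∣ p ^ s - 1) := by
  obtain ⟨a, ha0, ha⟩ := hs.1.2
  have hcoef (x : F) (hx : x ≠ 0) : ∃ j, scalarFrob G p x j := by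
    obtain ⟨g, hg, hg0, hg1⟩ := h2trans 0 1 0 x zero_ne_one hx.symm
    obtain ⟨j, hj⟩ := exists_forall_apply_eq_mul_pow hp.ne_zero hAGL hg hg0
    exact ⟨j, g, hg, hg1 ▸ hj⟩
  refine ⟨fun hm1 g => ⟨fun ⟨hg, hg0⟩ => ?_, fun ⟨b, k, hb, hg⟩ => ⟨?_, ?_⟩⟩, fun hall => ?_,
    fun _ => ?_⟩
  · exact exists_eq_mul_pow_mul_of_apply_zero hp.ne_zero hAGL hs hg hg0
  · have h1 : scalarFrob G p 1 s := by simpa [hm1] using hm.1.2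
    exact (scalarFrob_mul_of_scalarFrob_one hcoef hs h1 hb k).mem_of_forall hg
  · simp [hg, hp.ne_zero]
  · refine le_antisymm (hm.2 ⟨one_pos, ?_⟩) hm.1.1
    simpa [ha0] using ha.comp (hall a⁻¹ (inv_ne_zero ha0))
  obtain ⟨u, hu⟩ : ∃ u : Fˣ, scalarFrob G p u s := ⟨Units.mk0 a ha0, ha⟩
  have hsurj := exists_mk_pow_geomSum_eq hcoef hs hu
  have hQ : IsLeast {k | 0 < k ∧ (u : Fˣ ⧸ scalarSubgroup G p) ^ ∑ i ∈ range k, (p ^ s) ^ i = 1}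
      m := by
    simpa only [← scalarFrob_one_mul_iff hu] using hm
  have hdvd := isLeast_dvd_geomSum_of_isLeast_pow_geomSum hsurj hQ
  have he : 1 < p ^ s := Nat.one_lt_pow hs.1.1.ne' hp.one_lt
  exact ⟨orderOf_natCast_zmod_mul_sub_one he hdvd, fun r hr hrm =>
    hr.dvd_sub_one_of_forall_exists_geomSum_modEq hrm he.le hdvd.1.2 hm.1.1
      (exists_geomSum_modEq_of_isLeast_pow_geomSum hsurj hQ)⟩

/-- Lemma 3.8: let G ≤ AΓL(1,q) be 2-transitive on F_q, q = p^d, s the smallest positive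
integer with t(a,s) ∈ G₀ for some a ∈ F_q^×, and m the smallest positive integer with
t(1,ms) ∈ G₀. (a) If m = 1 then G₀ is the group generated by GL(1,q) and t(1,s)
(i.e. G₀ = {z ↦ a z^{p^{ks}} : a ∈ F_q^×, k ≥ 0}); conversely if G₀ ⊇ GL(1,q) then m = 1.
(b) If m > 1 then p^s has order m (mod m(p^s-1)) and S(m) ⊆ S(p^s-1). -/
theorem stmt_11 {F : Type*} [Field F] [Fintype F] (p d : ℕ) (hp : p.Prime) (hd : 0 < d)
    (hcard : Fintype.card F = p ^ d)
    (G : Subgroup (Equiv.Perm F))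
    (hAGL : ∀ g ∈ G, ∃ (a c : F) (k : ℕ), ∀ z : F, g z = a * z ^ p ^ k + c)
    (h2trans : ∀ x y x' y' : F, x ≠ y → x' ≠ y' → ∃ g ∈ G, g x = x' ∧ g y = y')
    (s : ℕ) (hs : IsLeast {k | 0 < k ∧ ∃ a : F, a ≠ 0 ∧ scalarFrob G p a k} s)
    (m : ℕ) (hm : IsLeast {k | 0 < k ∧ scalarFrob G p 1 (k * s)} m) :
    (m = 1 → ∀ g : Equiv.Perm F, (g ∈ G ∧ g 0 = 0) ↔
        ∃ (a : F) (k : ℕ), a ≠ 0 ∧ ∀ z : F, g z = a * z ^ p ^ (k * s)) ∧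
    ((∀ a : F, a ≠ 0 → scalarFrob G p a 0) → m = 1) ∧
    (1 < m → orderOf ((p ^ s : ℕ) : ZMod (m * (p ^ s - 1))) = m ∧
        ∀ r : ℕ, r.Prime → r ∣ m → r ∣ p ^ s - 1) :=
  stmt_11_general p hp G hAGL h2trans s hs m hm
end

section
/- Let p be a prime, q = p^d, and let G ≤ AΓL(1,q) act 2-transitively on F_q. Let s be the smallest positive integer such that t(a,s) ∈ G_0 for some a ∈ F_q^×, m the smallest positive integer such that t(1,ms) ∈ G_0, and H := {a ∈ F_q^× : t(a,0) ∈ G_0}. Then a subset P of F_q^× with 1 ∈ P is an imprimitive block for the action of G_0 on F_q^× if and only if there exist a divisor e of m, a subgroup K of H, and an element w ∈ F_q^× with t(w, es) ∈ G_0, such that w^{[ψ, m/e]} ∈ K and P = K ∪ w^{[ψ,1]}K ∪ w^{[ψ,2]}K ∪ ⋯ ∪ w^{[ψ, m/e − 1]}K, where ψ denotes the field automorphism z ↦ z^{p^{es}}. -/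
open scoped Pointwise

section GeomPow

variable {M : Type*} [Monoid M] {w : M} {x n : ℕ}

/-- The paper's `w^{[δ,i]}` for `δ : z ↦ z^x`. -/
def geomPow (w : M) (x i : ℕ) : M := w ^ ∑ t ∈ Finset.range i, x ^ t

@[simp] theorem geomPow_zero : geomPow w x 0 = 1 := by simp [geomPow]

@[simp] theorem geomPow_one : geomPow w x 1 = w := by simp [geomPow]

theorem geomPow_add (i j : ℕ) :
    geomPow w x (i + j) = geomPow w x i * geomPow w x j ^ x ^ i := by
  simp only [geomPow, Finset.sum_range_add, pow_add, ← pow_mul, Finset.sum_mul, mul_comm]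

theorem geomPow_eq_pow_div (hx : 1 < x) (w : M) (i : ℕ) :
    w ^ ((x ^ i - 1) / (x - 1)) = geomPow w x i := by
  rw [geomPow, Nat.geomSum_eq hx]

theorem geomPow_mul_mem {K : Submonoid M} (h : geomPow w x n ∈ K) (t : ℕ) :
    geomPow w x (n * t) ∈ K := by
  induction t with
  | zero => simp [K.one_mem]
  | succ t ih => rw [mul_add_one, geomPow_add]; exact mul_mem ih (pow_mem h _)

theorem exists_geomPow_eq_geomPow_mod_mul {K : Submonoid M} (h : geomPow w x n ∈ K) (i : ℕ) :
    ∃ κ ∈ K, geomPow w x i = geomPow w x (i % n) * κ :=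
  ⟨_, pow_mem (geomPow_mul_mem h (i / n)) _, by rw [← geomPow_add, Nat.mod_add_div]⟩

end GeomPow

section CosetUnion

variable {M : Type*} [CommMonoid M] {w : M} {x n : ℕ} {K : Submonoid M}

def cosetUnion (w : M) (x n : ℕ) (K : Set M) : Set M :=
  {v | ∃ i < n, ∃ k ∈ K, v = geomPow w x i * k}

theorem geomPow_mul_mem_cosetUnion (hn : 0 < n) (hw : geomPow w x n ∈ K) (i : ℕ) {k : M}
    (hk : k ∈ K) : geomPow w x i * k ∈ cosetUnion w x n K := by
  obtain ⟨κ, hκ, hi⟩ := exists_geomPow_eq_geomPow_mod_mul hw i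
  exact ⟨i % n, Nat.mod_lt i hn, κ * k, mul_mem hκ hk, by rw [hi, mul_assoc]⟩

theorem mapsTo_cosetUnion (hn : 0 < n) (hw : geomPow w x n ∈ K) (i : ℕ) {κ : M}
    (hκ : κ ∈ K) :
    Set.MapsTo (fun v => geomPow w x i * κ * v ^ x ^ i) (cosetUnion w x n K)
      (cosetUnion w x n K) := by
  rintro _ ⟨l, -, k, hk, rfl⟩
  have h : geomPow w x i * κ * (geomPow w x l * k) ^ x ^ i
      = geomPow w x (i + l) * (κ * k ^ x ^ i) := by
    rw [geomPow_add, mul_pow]; ac_rfl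
  simpa only [h] using geomPow_mul_mem_cosetUnion hn hw (i + l) (mul_mem hκ (pow_mem hk _))

end CosetUnion

theorem AddSubmonoid.dvd_of_isLeast_of_modEq {T : AddSubmonoid ℕ} {D t k : ℕ} (hD : 0 < D)
    (hT : ∀ a ∈ T, ∀ b, a ≡ b [MOD D] → b ∈ T) (ht : IsLeast {j | 0 < j ∧ j ∈ T} t)
    (hk : k ∈ T) : t ∣ k := by
  have hsub : ∀ a ∈ T, ∀ b ∈ T, b ≤ a → a - b ∈ T := by
    intro a ha b hb hba
    refine hT _ (T.add_mem ha (T.nsmul_mem hb (D - 1))) _ ?_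
    -- subtracting `b` is adding `(D - 1) • b`, modulo `D`
    have h : a + (D - 1) • b = a - b + b * D := by
      rw [smul_eq_mul, Nat.sub_mul, mul_comm b D]
      have : b ≤ D * b := Nat.le_mul_of_pos_left b hD
      omega
    rw [h]
    exact Nat.add_mul_mod_self_right _ _ _
  have hmod : k % t ∈ T := by
    rw [Nat.mod_eq_sub_mul_div, mul_comm]
    exact hsub _ hk _ (T.nsmul_mem ht.1.2 _) (Nat.div_mul_le_self k t)
  by_contra h
  exact (Nat.mod_lt k ht.1.1).not_ge
    (ht.2 ⟨Nat.pos_of_ne_zero (mt Nat.dvd_of_mod_eq_zero h), hmod⟩)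

section ScalarFrob

variable {F : Type*} [Field F] {G H : Subgroup (Equiv.Perm F)} {p d : ℕ} {a b w : F}
  {k l c : ℕ}

theorem scalarFrob_one_zero (G : Subgroup (Equiv.Perm F)) (p : ℕ) : scalarFrob G p (1 : F) 0 :=
  ⟨1, G.one_mem, by simp⟩

namespace scalarFrob

theorem mono (hGH : G ≤ H) (h : scalarFrob G p a k) : scalarFrob H p a k :=
  let ⟨g, hg, hga⟩ := h
  ⟨g, hGH hg, hga⟩

theorem ne_zero (h : scalarFrob G p a k) : a ≠ 0 := by
  rintro rfl
  obtain ⟨g, -, hg⟩ := h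
  exact zero_ne_one (g.injective (by simp [hg]))

theorem mul (ha : scalarFrob G p a k) (hb : scalarFrob G p b l) :
    scalarFrob G p (a * b ^ p ^ k) (k + l) := by
  obtain ⟨g, hg, hga⟩ := ha
  obtain ⟨h, hh, hhb⟩ := hb
  refine ⟨g * h, mul_mem hg hh, fun z => ?_⟩
  rw [Equiv.Perm.mul_apply, hhb, hga, mul_pow, ← pow_mul, ← pow_add, add_comm l, mul_assoc]

theorem mul_scalar (ha : scalarFrob G p a k) (hb : scalarFrob G p b 0) :
    scalarFrob G p (a * b) k := by
  simpa [mul_comm] using hb.mul ha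

theorem div_s12 (ha : scalarFrob G p a k) (hb : scalarFrob G p b k) : scalarFrob G p (a / b) 0 := by
  have hb0 := hb.ne_zero
  obtain ⟨g, hg, hga⟩ := ha
  obtain ⟨h, hh, hhb⟩ := hb
  refine ⟨g * h⁻¹, mul_mem hg (inv_mem hh), fun z => ?_⟩
  have hz : (h⁻¹ z) ^ p ^ k = z / b := by
    rw [eq_div_iff hb0, mul_comm, ← hhb, Equiv.Perm.inv_def, Equiv.apply_symm_apply]
  rw [Equiv.Perm.mul_apply, hga, hz]
  ring

theorem inv (ha : scalarFrob G p a 0) : scalarFrob G p a⁻¹ 0 := by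
  simpa using (scalarFrob_one_zero G p).div_s12 ha

theorem of_modEq [Fintype F] (hcard : Fintype.card F = p ^ d) (h : scalarFrob G p a k)
    (hkl : k ≡ l [MOD d]) : scalarFrob G p a l := by
  have hmod (z : F) (k : ℕ) : z ^ p ^ k = z ^ p ^ (k % d) := by
    conv_lhs => rw [← Nat.mod_add_div k d, pow_add, pow_mul, pow_mul, ← hcard,
      FiniteField.pow_card_pow]
  obtain ⟨g, hg, hga⟩ := h
  exact ⟨g, hg, fun z => by rw [hga, hmod, hkl, ← hmod]⟩

theorem geomPow (hw : scalarFrob G p w c) (i : ℕ) :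
    scalarFrob G p (geomPow w (p ^ c) i) (c * i) := by
  induction i with
  | zero => simpa using scalarFrob_one_zero G p
  | succ i ih =>
    rw [add_comm i 1, geomPow_add, geomPow_one, pow_one, mul_one_add]
    exact hw.mul ih

end scalarFrob

theorem exists_eq_mul_pow_of_apply_zero {g : Equiv.Perm F} (hp : p ≠ 0)
    (hg : ∃ (a b : F) (k : ℕ), ∀ z, g z = a * z ^ p ^ k + b) (hg0 : g 0 = 0) :
    ∃ k, ∀ z, g z = g 1 * z ^ p ^ k := by
  obtain ⟨a, b, k, hg⟩ := hg
  have hb : b = 0 := by simpa [hg, hp] using hg0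
  exact ⟨k, fun z => by simp [hg, hb]⟩

def scalarSubmonoid (G : Subgroup (Equiv.Perm F)) (p : ℕ) : Submonoid F where
  carrier := {a | scalarFrob G p a 0}
  one_mem' := scalarFrob_one_zero G p
  mul_mem' ha hb := by simpa using ha.mul hb

@[simp] theorem mem_scalarSubmonoid : a ∈ scalarSubmonoid G p ↔ scalarFrob G p a 0 := Iff.rfl

def frobExponents (G : Subgroup (Equiv.Perm F)) (p : ℕ) : AddSubmonoid ℕ where
  carrier := {k | ∃ a : F, a ≠ 0 ∧ scalarFrob G p a k}
  zero_mem' := ⟨1, one_ne_zero, scalarFrob_one_zero G p⟩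
  add_mem' := fun ⟨_, _, ha⟩ ⟨_, _, hb⟩ => ⟨_, (ha.mul hb).ne_zero, ha.mul hb⟩

def frobPowerExponents (G : Subgroup (Equiv.Perm F)) (p : ℕ) : AddSubmonoid ℕ where
  carrier := {k | scalarFrob G p (1 : F) k}
  zero_mem' := scalarFrob_one_zero G p
  add_mem' ha hb := by simpa using ha.mul hb

end ScalarFrob

section Block

open MulAction

variable {X : Type*} {G : Subgroup (Equiv.Perm X)} {P : Set X} {o x : X} {g : Equiv.Perm X}

theorem Equiv.Perm.mem_stabilizer_set_iff_image_eq :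
    g ∈ stabilizer (Equiv.Perm X) P ↔ ⇑g '' P = P := by
  rw [mem_stabilizer_iff, ← Set.image_smul]
  rfl

theorem mem_stabilizer_of_block
    (hP : ∀ g ∈ G, g o = o → ⇑g '' P = P ∨ ⇑g '' P ∩ P = ∅)
    (hx : x ∈ P) (hg : g ∈ G) (hgo : g o = o) (hgx : g x ∈ P) :
    g ∈ stabilizer (Equiv.Perm X) P :=
  Equiv.Perm.mem_stabilizer_set_iff_image_eq.2 <|
    (hP g hg hgo).resolve_right (Set.nonempty_iff_ne_empty.1 ⟨g x, ⟨x, hx, rfl⟩, hgx⟩)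

theorem image_eq_or_disjoint_of_stabilizer
    (hfix : ∀ f ∈ G, f o = o → f x = x → f ∈ stabilizer (Equiv.Perm X) P)
    (hmove : ∀ u ∈ P, ∃ h ∈ G, h o = o ∧ h x = u ∧ h ∈ stabilizer (Equiv.Perm X) P)
    (hg : g ∈ G) (hgo : g o = o) : ⇑g '' P = P ∨ ⇑g '' P ∩ P = ∅ := by
  rw [← Equiv.Perm.mem_stabilizer_set_iff_image_eq]
  refine (Set.eq_empty_or_nonempty _).symm.imp (fun ⟨_, ⟨u, hu, rfl⟩, hgu⟩ => ?_) id
  obtain ⟨h₁, hh₁, hh₁o, hh₁x, hh₁P⟩ := hmove u hu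
  obtain ⟨h₂, hh₂, hh₂o, hh₂x, hh₂P⟩ := hmove (g u) hgu
  have hf : h₂⁻¹ * g * h₁ ∈ stabilizer (Equiv.Perm X) P := by
    refine hfix _ (mul_mem (mul_mem (inv_mem hh₂) hg) hh₁) ?_ ?_ <;>
      simp only [Equiv.Perm.mul_apply, Equiv.Perm.inv_eq_iff_eq, hh₁o, hgo, hh₂o, hh₁x,
        hh₂x]
  have hg : g = h₂ * (h₂⁻¹ * g * h₁) * h₁⁻¹ := by group
  rw [hg]
  exact mul_mem (mul_mem hh₂P hf) (inv_mem hh₁P)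

end Block

section Semilinear

open MulAction

variable {F : Type*} [Field F] {G S : Subgroup (Equiv.Perm F)} {p d s m : ℕ} {a w : F}
  {k c n : ℕ}

theorem eq_setOf_scalarFrob_of_block {P : Set F}
    (hG₀ : ∀ g ∈ G, g 0 = 0 → ∃ k, ∀ z, g z = g 1 * z ^ p ^ k)
    (htrans : ∀ v : F, v ≠ 0 → ∃ g ∈ G, g 0 = 0 ∧ g 1 = v)
    (hP0 : ∀ z ∈ P, z ≠ 0) (hP1 : (1 : F) ∈ P)
    (hblock : ∀ g ∈ G, g 0 = 0 → ⇑g '' P = P ∨ ⇑g '' P ∩ P = ∅) :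
    P = {a | ∃ k, scalarFrob (G ⊓ stabilizer (Equiv.Perm F) P) p a k} := by
  ext v
  constructor
  · intro hv
    obtain ⟨g, hg, hg0, hg1⟩ := htrans v (hP0 v hv)
    obtain ⟨k, hk⟩ := hG₀ g hg hg0
    exact ⟨k, g, ⟨hg, mem_stabilizer_of_block hblock hP1 hg hg0 (hg1 ▸ hv)⟩, hg1 ▸ hk⟩
  · rintro ⟨k, g, ⟨-, hgP⟩, hg⟩
    rw [← Equiv.Perm.mem_stabilizer_set_iff_image_eq.1 hgP]
    exact ⟨1, hP1, by simp [hg]⟩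

theorem scalarFrob.inf_stabilizer_of_block {P : Set F} (hp : p ≠ 0)
    (hblock : ∀ g ∈ G, g 0 = 0 → ⇑g '' P = P ∨ ⇑g '' P ∩ P = ∅)
    (hP1 : (1 : F) ∈ P) (h : scalarFrob G p 1 k) :
    scalarFrob (G ⊓ stabilizer (Equiv.Perm F) P) p 1 k := by
  obtain ⟨g, hg, hgz⟩ := h
  exact ⟨g, ⟨hg, mem_stabilizer_of_block hblock hP1 hg (by simp [hgz, hp]) (by simpa [hgz])⟩,
    hgz⟩

variable [Fintype F]

theorem scalarFrob.dvd_of_isLeast (hcard : Fintype.card F = p ^ d) (hd : 0 < d)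
    (hs : IsLeast {k | 0 < k ∧ ∃ a : F, a ≠ 0 ∧ scalarFrob G p a k} s)
    (h : scalarFrob G p a k) : s ∣ k :=
  AddSubmonoid.dvd_of_isLeast_of_modEq (T := frobExponents G p) hd
    (fun _ ⟨a, ha, h⟩ _ hkl => ⟨a, ha, h.of_modEq hcard hkl⟩) hs ⟨a, h.ne_zero, h⟩

theorem scalarFrob.mul_dvd_of_isLeast (hcard : Fintype.card F = p ^ d) (hd : 0 < d)
    (hs : IsLeast {k | 0 < k ∧ ∃ a : F, a ≠ 0 ∧ scalarFrob G p a k} s)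
    (hm : IsLeast {k | 0 < k ∧ scalarFrob G p 1 (k * s)} m)
    (h : scalarFrob G p 1 k) : m * s ∣ k := by
  obtain ⟨j, rfl⟩ := h.dvd_of_isLeast hcard hd hs
  obtain ⟨t, rfl⟩ := AddSubmonoid.dvd_of_isLeast_of_modEq
    (T := (frobPowerExponents G p).comap (AddMonoidHom.mulRight s)) hd
    (fun _ h _ hjl => h.of_modEq hcard (hjl.mul_right s)) hm
    (show scalarFrob G p 1 (j * s) by rwa [mul_comm])
  exact ⟨t, by ring⟩

theorem exists_setOf_scalarFrob_eq_cosetUnion (hcard : Fintype.card F = p ^ d) (hd : 0 < d)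
    (hS : ∀ a k, scalarFrob S p a k → s ∣ k) (hm : scalarFrob S p 1 (m * s)) (hm0 : 0 < m) :
    ∃ e, 0 < e ∧ e ∣ m ∧ ∃ w, scalarFrob S p w (e * s) ∧
      geomPow w (p ^ (e * s)) (m / e) ∈ scalarSubmonoid S p ∧
      {a | ∃ k, scalarFrob S p a k} =
        cosetUnion w (p ^ (e * s)) (m / e) (scalarSubmonoid S p) := by
  let T := (frobExponents S p).comap (AddMonoidHom.mulRight s)
  have hmT : m ∈ T :=
    show ∃ a : F, a ≠ 0 ∧ scalarFrob S p a (m * s) from ⟨1, one_ne_zero, hm⟩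
  obtain ⟨e, he⟩ : ∃ e, IsLeast {j | 0 < j ∧ j ∈ T} e :=
    ⟨_, Nat.sInf_mem (s := {j | 0 < j ∧ j ∈ T}) ⟨m, hm0, hmT⟩,
      fun _ hj => Nat.sInf_le hj⟩
  have hT (j : ℕ) (hj : j ∈ T) : e ∣ j := AddSubmonoid.dvd_of_isLeast_of_modEq (T := T) hd
    (fun _ ⟨a, ha, h⟩ _ hjl => ⟨a, ha, h.of_modEq hcard (hjl.mul_right s)⟩) he hj
  obtain ⟨he0, w, -, hw⟩ := he.1
  replace hw : scalarFrob S p w (e * s) := hw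
  obtain ⟨n, rfl⟩ := hT m hmT
  have hn : 0 < n := Nat.pos_of_mul_pos_left hm0
  have hwn : geomPow w (p ^ (e * s)) n ∈ scalarSubmonoid S p := by
    have h1 : scalarFrob S p 1 (e * s * n) := by rwa [mul_right_comm]
    simpa using (hw.geomPow n).div_s12 h1
  refine ⟨e, he0, dvd_mul_right e n, w, hw, ?_⟩
  rw [Nat.mul_div_cancel_left n he0]
  refine ⟨hwn, Set.ext fun a => ⟨?_, ?_⟩⟩
  · rintro ⟨k, hk⟩
    obtain ⟨j, rfl⟩ := hS a k hk
    have hj : scalarFrob S p a (j * s) := by rwa [mul_comm]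
    obtain ⟨i, rfl⟩ := hT j ⟨a, hk.ne_zero, hj⟩
    rw [← mul_assoc, mul_comm s] at hk
    have hi := (hw.geomPow i).ne_zero
    simpa [mul_div_cancel₀ _ hi] using
      geomPow_mul_mem_cosetUnion hn hwn i (hk.div_s12 (hw.geomPow i))
  · rintro ⟨i, -, κ, hκ, rfl⟩
    exact ⟨_, (hw.geomPow i).mul_scalar hκ⟩

theorem image_cosetUnion_eq_or_disjoint {K : Submonoid F} (hp : p ≠ 0)
    (hG₀ : ∀ g ∈ G, g 0 = 0 → ∃ k, ∀ z, g z = g 1 * z ^ p ^ k)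
    (hker : ∀ k, scalarFrob G p 1 k → c * n ∣ k) (hn : 0 < n)
    (hKG : ∀ κ ∈ K, scalarFrob G p κ 0) (hKinv : ∀ κ ∈ K, κ⁻¹ ∈ K)
    (hw : scalarFrob G p w c) (hwK : geomPow w (p ^ c) n ∈ K) {g : Equiv.Perm F} (hg : g ∈ G)
    (hg0 : g 0 = 0) :
    ⇑g '' cosetUnion w (p ^ c) n K = cosetUnion w (p ^ c) n K ∨
      ⇑g '' cosetUnion w (p ^ c) n K ∩ cosetUnion w (p ^ c) n K = ∅ := by
  have hstab (f : Equiv.Perm F) (i : ℕ) (κ : F) (hκ : κ ∈ K)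
      (hf : ∀ z, f z = geomPow w (p ^ c) i * κ * z ^ p ^ (c * i)) :
      f ∈ stabilizer (Equiv.Perm F) (cosetUnion w (p ^ c) n K) := by
    have hmaps := mapsTo_cosetUnion hn hwK i hκ
    simp only [← pow_mul, ← hf] at hmaps
    exact Equiv.Perm.mem_stabilizer_set_iff_image_eq.2
      (((Set.toFinite _).injOn_iff_bijOn_of_mapsTo hmaps).1 f.injective.injOn).image_eq
  refine image_eq_or_disjoint_of_stabilizer (x := 1) (fun f hf hf0 hf1 => ?_) (fun u hu => ?_)
    hg hg0
  · obtain ⟨k, hk⟩ := hG₀ f hf hf0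
    rw [hf1] at hk
    obtain ⟨t, rfl⟩ := hker k ⟨f, hf, hk⟩
    have hK := geomPow_mul_mem hwK t
    refine hstab f (n * t) _ (hKinv _ hK) fun z => ?_
    rw [hk, mul_inv_cancel₀ (hKG _ hK).ne_zero, mul_assoc c]
  · obtain ⟨i, -, κ, hκ, rfl⟩ := hu
    obtain ⟨f, hf, hfz⟩ := (hw.geomPow i).mul_scalar (hKG κ hκ)
    exact ⟨f, hf, by simp [hfz, hp], by simp [hfz], hstab f i κ hκ hfz⟩

end Semilinear

theorem stmt_12_general {F : Type*} [Field F] [Fintype F] (p d : ℕ)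
    (hcard : Fintype.card F = p ^ d)
    (G : Subgroup (Equiv.Perm F))
    (hAGL : ∀ g ∈ G, ∃ (a c : F) (k : ℕ), ∀ z : F, g z = a * z ^ p ^ k + c)
    (h2trans : ∀ x y x' y' : F, x ≠ y → x' ≠ y' → ∃ g ∈ G, g x = x' ∧ g y = y')
    (s : ℕ) (hs : IsLeast {k | 0 < k ∧ ∃ a : F, a ≠ 0 ∧ scalarFrob G p a k} s)
    (m : ℕ) (hm : IsLeast {k | 0 < k ∧ scalarFrob G p 1 (k * s)} m)
    (P : Set F) (hP0 : ∀ z ∈ P, z ≠ 0) (hP1 : (1 : F) ∈ P) :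
    (∀ g ∈ G, g 0 = 0 → (⇑g '' P = P ∨ (⇑g '' P) ∩ P = ∅)) ↔
      ∃ e : ℕ, 0 < e ∧ e ∣ m ∧
        ∃ K : Set F, K ⊆ {a : F | scalarFrob G p a 0} ∧ (1 : F) ∈ K ∧
          (∀ x ∈ K, ∀ y ∈ K, x * y ∈ K) ∧ (∀ x ∈ K, x⁻¹ ∈ K) ∧
          ∃ w : F, scalarFrob G p w (e * s) ∧
            w ^ ((p ^ (e * s * (m / e)) - 1) / (p ^ (e * s) - 1)) ∈ K ∧
            P = {v : F | ∃ i < m / e, ∃ k ∈ K,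
              v = w ^ ((p ^ (e * s * i) - 1) / (p ^ (e * s) - 1)) * k} := by
  have hq : 1 < p ^ d := hcard ▸ Fintype.one_lt_card
  have hd : 0 < d := Nat.pos_of_ne_zero (by rintro rfl; simp at hq)
  have hp : 1 < p := (Nat.one_lt_pow_iff hd.ne').1 hq
  have hp0 : p ≠ 0 := by omega
  have hx (e : ℕ) (he : 0 < e) : 1 < p ^ (e * s) :=
    Nat.one_lt_pow (Nat.mul_pos he hs.1.1).ne' hp
  have hG₀ (g) (hg : g ∈ G) := exists_eq_mul_pow_of_apply_zero hp0 (hAGL g hg)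
  constructor
  · intro hblock
    let S := G ⊓ MulAction.stabilizer (Equiv.Perm F) P
    obtain ⟨e, he, hem, w, hw, hwK, hU⟩ := exists_setOf_scalarFrob_eq_cosetUnion hcard hd
      (fun a k h => (h.mono inf_le_left).dvd_of_isLeast hcard hd hs)
      (hm.1.2.inf_stabilizer_of_block hp0 hblock hP1) hm.1.1
    refine ⟨e, he, hem, scalarSubmonoid S p, fun a ha => ha.mono inf_le_left, one_mem _,
      fun a ha b hb => mul_mem ha hb, fun a ha => ha.inv, w, hw.mono inf_le_left, ?_, ?_⟩
    · rwa [pow_mul p (e * s), geomPow_eq_pow_div (hx e he)]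
    · rw [eq_setOf_scalarFrob_of_block hG₀ (fun v hv => h2trans 0 1 0 v zero_ne_one hv.symm)
        hP0 hP1 hblock]
      simp only [pow_mul p (e * s), geomPow_eq_pow_div (hx e he)]
      exact hU
  · rintro ⟨e, he, hem, K, hKG, hK1, hKmul, hKinv, w, hw, hwK, rfl⟩
    simp only [pow_mul p (e * s), geomPow_eq_pow_div (hx e he)] at hwK ⊢
    intro g hg hg0
    refine image_cosetUnion_eq_or_disjoint (K := ⟨⟨K, fun ha hb => hKmul _ ha _ hb⟩, hK1⟩)
      hp0 hG₀ (fun k hk => ?_) (Nat.div_pos (Nat.le_of_dvd hm.1.1 hem) he) hKG hKinv hw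
      hwK hg hg0
    rw [mul_right_comm, Nat.mul_div_cancel' hem]
    exact hk.mul_dvd_of_isLeast hcard hd hs hm

/-- Lemma 3.9: let G ≤ AΓL(1,q) be 2-transitive on F_q, q = p^d, with s, m as in
Lemma 3.8 and H = {a : t(a,0) ∈ G₀}. A subset P of F_q^× containing 1 is an imprimitive
block of G₀ on F_q^× iff P = K ∪ w^{[ψ,1]}K ∪ ⋯ ∪ w^{[ψ,m/e-1]}K for some divisor e of m,
some subgroup K ≤ H and some w with t(w,es) ∈ G₀ and w^{[ψ,m/e]} ∈ K, where ψ = ζ^{es}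
and [ψ,i] = (p^{esi}-1)/(p^{es}-1). -/
theorem stmt_12 {F : Type*} [Field F] [Fintype F] (p d : ℕ) (hp : p.Prime) (hd : 0 < d)
    (hcard : Fintype.card F = p ^ d)
    (G : Subgroup (Equiv.Perm F))
    (hAGL : ∀ g ∈ G, ∃ (a c : F) (k : ℕ), ∀ z : F, g z = a * z ^ p ^ k + c)
    (h2trans : ∀ x y x' y' : F, x ≠ y → x' ≠ y' → ∃ g ∈ G, g x = x' ∧ g y = y')
    (s : ℕ) (hs : IsLeast {k | 0 < k ∧ ∃ a : F, a ≠ 0 ∧ scalarFrob G p a k} s)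
    (m : ℕ) (hm : IsLeast {k | 0 < k ∧ scalarFrob G p 1 (k * s)} m)
    (P : Set F) (hP0 : ∀ z ∈ P, z ≠ 0) (hP1 : (1 : F) ∈ P) :
    (∀ g ∈ G, g 0 = 0 → (⇑g '' P = P ∨ (⇑g '' P) ∩ P = ∅)) ↔
      ∃ e : ℕ, 0 < e ∧ e ∣ m ∧
        ∃ K : Set F, K ⊆ {a : F | scalarFrob G p a 0} ∧ (1 : F) ∈ K ∧
          (∀ x ∈ K, ∀ y ∈ K, x * y ∈ K) ∧ (∀ x ∈ K, x⁻¹ ∈ K) ∧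
          ∃ w : F, scalarFrob G p w (e * s) ∧
            w ^ ((p ^ (e * s * (m / e)) - 1) / (p ^ (e * s) - 1)) ∈ K ∧
            P = {v : F | ∃ i < m / e, ∃ k ∈ K,
              v = w ^ ((p ^ (e * s * i) - 1) / (p ^ (e * s) - 1)) * k} :=
  stmt_12_general p d hcard G hAGL h2trans s hs m hm P hP0 hP1
end

section
/- Let p be an odd prime, q = p^d, and let G ≤ AΓL(1,q) act 2-transitively on F_q. Let H := {a ∈ F_q^× : t(a,0) ∈ G_0}, let P be an imprimitive block for the action of G_0 on F_q^× with 1 ∈ P, and set K := P ∩ H. Let T̃₁ and T̃₂ be the subgroups of the additive group (F_q,+) generated by {a − 1 : a ∈ P} and by P respectively, let T_i := {z ↦ z + c : c ∈ T̃_i} (i = 1,2), let κ be the permutation z ↦ −z + 1 of F_q, let G_{0,P} be the setwise stabilizer of P in G_0, and let J := ⟨G_{0,P}, κ⟩ ≤ Sym(F_q). If |K| is odd, then J₁ := T₁·G_{0,P} is a subgroup of J with T₁ normal in J₁ and T₁ ∩ G_{0,P} = 1, J₁ is normal in J, κ ∉ J₁, and J = J₁ ∪ J₁κ; that is, J = (T₁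 ⋊ G_{0,P}) ⋊ ⟨κ⟩ as an internal semidirect product. If |K| is even, then T₂ is normal in J, T₂ ∩ G_{0,P} = 1, and J = T₂·G_{0,P}; that is, J = T₂ ⋊ G_{0,P}. -/
open Pointwise

/-- The group of translations z ↦ c + z with c running over an additive subgroup A. -/
def translations {F : Type*} [Field F] (A : AddSubgroup F) : Subgroup (Equiv.Perm F) where
  carrier := {g : Equiv.Perm F | ∃ c ∈ A, ∀ z : F, g z = c + z}
  one_mem' := ⟨0, A.zero_mem, fun z => by simp⟩
  mul_mem' := by
    rintro a b ⟨c, hc, ha⟩ ⟨c', hc', hb⟩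
    exact ⟨c + c', A.add_mem hc hc', fun z => by
      rw [Equiv.Perm.mul_apply, hb, ha, add_assoc]⟩
  inv_mem' := by
    rintro a ⟨c, hc, ha⟩
    refine ⟨-c, A.neg_mem hc, fun z => ?_⟩
    rw [Equiv.Perm.inv_def, Equiv.symm_apply_eq, ha]
    abel

/-- G_{0,P}: the setwise stabilizer of P in the stabilizer of 0 in G. -/
def pstab {F : Type*} [Field F] (G : Subgroup (Equiv.Perm F)) (P : Set F) :
    Subgroup (Equiv.Perm F) :=
  (G ⊓ MulAction.stabilizer (Equiv.Perm F) (0 : F)) ⊓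
    MulAction.stabilizer (Equiv.Perm F) P

/-- The permutation κ : z ↦ -z + 1 of F. -/
def kappa (F : Type*) [Field F] : Equiv.Perm F :=
  (Equiv.neg F).trans (Equiv.addLeft (1 : F))

/-!
Every element of `G` fixing `0` is additive (a map `z ↦ a z^{p^k}`), so `G_{0,P}` normalizes
the translation groups `T₁` and `T₂`, and conjugating `g ∈ G_{0,P}` by `κ` gives the translation
by `1 - g 1` followed by `g`. Hence the commutators `[κ, g]` generate `T₁` inside `J`. The scalar
maps in `G_{0,P}` form a subgroup of `Fˣ` with underlying set `K`; as `-1` is the only involution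
of `Fˣ`, `|K|` is even iff `z ↦ -z` lies in `G_{0,P}`. In that case `κ = (z ↦ z + 1) ∘ (z ↦ -z)`
lies in `T₂ G_{0,P}`. Otherwise `κ ∉ T₁ G_{0,P}`, while `κ` normalizes `T₁ G_{0,P}` and is an
involution, so `J = T₁ G_{0,P} ∪ T₁ G_{0,P} κ`.
-/

section GroupTheory

open Subgroup

variable {G : Type*} [Group G]

theorem Subgroup.conj_mem_of_le_normalizer {H N : Subgroup G} (h : H ≤ normalizer (N : Set G)) :
    ∀ x ∈ H, ∀ n ∈ N, x * n * x⁻¹ ∈ N :=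
  fun _ hx n hn => (mem_normalizer_iff.mp (h hx) n).mp hn

theorem Subgroup.le_normalizer_of_conj_mem {H N : Subgroup G}
    (h : ∀ x ∈ H, ∀ n ∈ N, x * n * x⁻¹ ∈ N) : H ≤ normalizer (N : Set G) := by
  intro x hx n
  refine ⟨h x hx n, fun hn => ?_⟩
  simpa [mul_assoc] using h x⁻¹ (inv_mem hx) _ hn

theorem Subgroup.mem_normalizer_of_mul_self_eq_one {N : Subgroup G} {k : G} (hk : k * k = 1)
    (h : ∀ n ∈ N, k * n * k⁻¹ ∈ N) : k ∈ normalizer (N : Set G) := by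
  refine mem_normalizer_iff.mpr fun n => ⟨h n, fun hn => ?_⟩
  have hconj : k * (k * n * k⁻¹) * k⁻¹ = (k * k) * n * (k * k)⁻¹ := by group
  simpa [hconj, hk] using h _ hn

theorem Subgroup.closure_union_singleton_eq_sup_zpowers {H N : Subgroup G} {k : G} (hHN : H ≤ N)
    (hN : N ≤ closure ((H : Set G) ∪ {k})) :
    closure ((H : Set G) ∪ {k}) = N ⊔ zpowers k := by
  refine le_antisymm ((closure_le _).mpr (Set.union_subset ?_ ?_)) ?_
  · exact fun h hh => mem_sup_left (hHN hh)
  · exact Set.singleton_subset_iff.mpr (mem_sup_right (mem_zpowers k))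
  · exact sup_le hN (zpowers_le.mpr (subset_closure (Or.inr rfl)))

theorem Subgroup.coe_zpowers_of_mul_self_eq_one {k : G} (hk : k * k = 1) :
    (zpowers k : Set G) = {1, k} := by
  ext x
  simp only [SetLike.mem_coe, mem_zpowers_iff, Set.mem_insert_iff, Set.mem_singleton_iff]
  constructor
  · rintro ⟨n, rfl⟩
    have hk' : k⁻¹ = k := (eq_inv_of_mul_eq_one_left hk).symm
    induction n using Int.induction_on with
    | zero => simp
    | succ n ih => rcases ih with h | h <;> simp [zpow_add_one, h, hk]
    | pred n ih => rcases ih with h | h <;> simp [zpow_sub_one, h, hk, hk']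
  · rintro (rfl | rfl)
    exacts [⟨0, zpow_zero _⟩, ⟨1, zpow_one _⟩]

theorem Subgroup.coe_sup_zpowers_of_mul_self_eq_one {N : Subgroup G} {k : G} (hk : k * k = 1)
    (hkN : k ∈ normalizer (N : Set G)) :
    ((N ⊔ zpowers k : Subgroup G) : Set G) = (N : Set G) ∪ (N : Set G) * {k} := by
  rw [coe_mul_of_right_le_normalizer_left _ _ (zpowers_le.mpr hkN),
    coe_zpowers_of_mul_self_eq_one hk, Set.insert_eq, Set.mul_union, Set.singleton_one, mul_one]

theorem map_sub_of_map_add {M : Type*} [AddGroup M] {f : M → M}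
    (hf : ∀ x y, f (x + y) = f x + f y) (x y : M) : f (x - y) = f x - f y :=
  map_sub (AddMonoidHom.mk' f hf) x y

theorem apply_mem_closure_of_map_add {M : Type*} [AddGroup M] {f : M → M}
    (hf : ∀ x y, f (x + y) = f x + f y) {S : Set M} (hS : ∀ s ∈ S, f s ∈ AddSubgroup.closure S)
    {c : M} (hc : c ∈ AddSubgroup.closure S) : f c ∈ AddSubgroup.closure S :=
  (AddSubgroup.closure_le ((AddSubgroup.closure S).comap (AddMonoidHom.mk' f hf))).mpr hS hc

theorem Subgroup.neg_one_mem_iff_even_natCard {F : Type*} [Field F] [Finite F]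
    (hF : ringChar F ≠ 2) (S : Subgroup Fˣ) : (-1 : Fˣ) ∈ S ↔ Even (Nat.card S) := by
  have horder : ∀ u : Fˣ, orderOf u = 2 ↔ u = -1 := fun u => by
    rw [← orderOf_units, CharP.orderOf_eq_two_iff (ringChar F) hF, Units.ext_iff, Units.val_neg,
      Units.val_one]
  rw [even_iff_two_dvd]
  constructor
  · intro h
    exact (horder _).mpr rfl ▸ S.orderOf_dvd_natCard h
  · intro h
    obtain ⟨x, hx⟩ := exists_prime_orderOf_dvd_card' 2 h
    rw [← Subgroup.orderOf_coe, horder] at hx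
    exact hx ▸ x.2

end GroupTheory

section Translations

open Subgroup

variable {F : Type*} [Field F]

theorem mem_translations_iff {A : AddSubgroup F} {g : Equiv.Perm F} :
    g ∈ translations A ↔ ∃ c ∈ A, g = Equiv.addLeft c :=
  exists_congr fun _ => and_congr_right fun _ => ⟨fun h => Equiv.ext h, fun h z => by rw [h]; rfl⟩

theorem addLeft_mem_translations {A : AddSubgroup F} {c : F} (hc : c ∈ A) :
    Equiv.addLeft c ∈ translations A :=
  mem_translations_iff.mpr ⟨c, hc, rfl⟩

theorem translations_closure_le {S : Set F} {H : Subgroup (Equiv.Perm F)}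
    (hS : ∀ s ∈ S, Equiv.addLeft s ∈ H) : translations (AddSubgroup.closure S) ≤ H := by
  intro g hg
  obtain ⟨c, hc, rfl⟩ := mem_translations_iff.mp hg
  clear hg
  induction hc using AddSubgroup.closure_induction with
  | mem s hs => exact hS s hs
  | zero => simp
  | add x y _ _ hx hy => simpa using H.mul_mem hx hy
  | neg x _ hx => simpa using H.inv_mem hx

theorem conj_addLeft_of_map_add {g : Equiv.Perm F} (hg : ∀ x y, g (x + y) = g x + g y) (c : F) :
    g * Equiv.addLeft c * g⁻¹ = Equiv.addLeft (g c) := by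
  ext z
  simp [hg]

theorem le_normalizer_translations {H : Subgroup (Equiv.Perm F)} {A : AddSubgroup F}
    (hadd : ∀ g ∈ H, ∀ x y, g (x + y) = g x + g y) (hA : ∀ g ∈ H, ∀ c ∈ A, g c ∈ A) :
    H ≤ normalizer (translations A : Set (Equiv.Perm F)) := by
  refine le_normalizer_of_conj_mem fun g hg t ht => ?_
  obtain ⟨c, hc, rfl⟩ := mem_translations_iff.mp ht
  rw [conj_addLeft_of_map_add (hadd g hg)]
  exact addLeft_mem_translations (hA g hg c hc)

@[simp] theorem kappa_apply (z : F) : kappa F z = -z + 1 := by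
  simp [kappa, add_comm]

theorem kappa_mul_self : kappa F * kappa F = 1 := by
  ext z
  simp

theorem kappa_inv : (kappa F)⁻¹ = kappa F :=
  inv_eq_of_mul_eq_one_left kappa_mul_self

theorem kappa_eq_addLeft_one_mul_neg : kappa F = Equiv.addLeft 1 * Equiv.neg F := rfl

theorem kappa_conj_addLeft (c : F) :
    kappa F * Equiv.addLeft c * (kappa F)⁻¹ = Equiv.addLeft (-c) := by
  ext z
  simp [kappa_inv]
  ring

theorem kappa_conj_of_map_add {g : Equiv.Perm F} (hg : ∀ x y, g (x + y) = g x + g y) :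
    kappa F * g * (kappa F)⁻¹ = Equiv.addLeft (1 - g 1) * g := by
  ext z
  simp [kappa_inv, neg_add_eq_sub, map_sub_of_map_add hg]
  ring

end Translations

section Block

open Subgroup

variable {F : Type*} [Field F] {G : Subgroup (Equiv.Perm F)} {P : Set F}

theorem map_add_of_affine {p : ℕ} [Fact p.Prime] [CharP F p] {g : Equiv.Perm F} {a c : F} {k : ℕ}
    (hg : ∀ z, g z = a * z ^ p ^ k + c) (h0 : g 0 = 0) (x y : F) : g (x + y) = g x + g y := by
  have hc : c = 0 := by simpa [hg, zero_pow (pow_ne_zero k (Fact.out : p.Prime).ne_zero)] using h0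
  simp only [hg, hc, add_zero, add_pow_char_pow, mul_add]

theorem mem_pstab_iff {g : Equiv.Perm F} : g ∈ pstab G P ↔ g ∈ G ∧ g 0 = 0 ∧ ⇑g '' P = P := by
  simp only [pstab, mem_inf, MulAction.mem_stabilizer_iff, Equiv.Perm.smul_def, and_assoc]
  rw [← Set.image_smul]
  rfl

theorem translations_inter_pstab (A : AddSubgroup F) (G : Subgroup (Equiv.Perm F)) (P : Set F) :
    (translations A : Set (Equiv.Perm F)) ∩ pstab G P = {1} := by
  refine Set.eq_singleton_iff_unique_mem.mpr ⟨⟨one_mem _, one_mem _⟩, ?_⟩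
  rintro g ⟨hgA, hgP⟩
  obtain ⟨c, -, rfl⟩ := mem_translations_iff.mp hgA
  have hc : c = 0 := by simpa using (mem_pstab_iff.mp hgP).2.1
  rw [hc, Equiv.addLeft_zero]

theorem apply_mem_of_mem_pstab {g : Equiv.Perm F} (hg : g ∈ pstab G P) {x : F} (hx : x ∈ P) :
    g x ∈ P :=
  (mem_pstab_iff.mp hg).2.2 ▸ Set.mem_image_of_mem g hx

theorem mem_pstab_of_apply_one_mem (hP1 : (1 : F) ∈ P)
    (hPblock : ∀ g ∈ G, g 0 = 0 → (⇑g '' P = P ∨ (⇑g '' P) ∩ P = ∅)) {g : Equiv.Perm F}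
    (hg : g ∈ G) (h0 : g 0 = 0) (h1 : g 1 ∈ P) : g ∈ pstab G P := by
  refine mem_pstab_iff.mpr ⟨hg, h0, (hPblock g hg h0).resolve_right fun h => ?_⟩
  exact (Set.eq_empty_iff_forall_notMem.mp h) (g 1) ⟨Set.mem_image_of_mem g hP1, h1⟩

theorem exists_mem_pstab_apply_one_eq
    (h2trans : ∀ x y x' y' : F, x ≠ y → x' ≠ y' → ∃ g ∈ G, g x = x' ∧ g y = y')
    (hP0 : ∀ z ∈ P, z ≠ 0) (hP1 : (1 : F) ∈ P)
    (hPblock : ∀ g ∈ G, g 0 = 0 → (⇑g '' P = P ∨ (⇑g '' P) ∩ P = ∅)) {a : F} (ha : a ∈ P) :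
    ∃ g ∈ pstab G P, g 1 = a := by
  obtain ⟨g, hg, h0, h1⟩ := h2trans 0 1 0 a zero_ne_one (hP0 a ha).symm
  exact ⟨g, mem_pstab_of_apply_one_mem hP1 hPblock hg h0 (h1 ▸ ha), h1⟩

theorem map_add_of_mem_pstab (hadd : ∀ g ∈ G, g 0 = 0 → ∀ x y, g (x + y) = g x + g y)
    {g : Equiv.Perm F} (hg : g ∈ pstab G P) (x y : F) : g (x + y) = g x + g y :=
  hadd g (mem_pstab_iff.mp hg).1 (mem_pstab_iff.mp hg).2.1 x y

theorem pstab_le_normalizer_translations_closure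
    (hadd : ∀ g ∈ G, g 0 = 0 → ∀ x y, g (x + y) = g x + g y) :
    pstab G P ≤ normalizer (translations (AddSubgroup.closure P) : Set (Equiv.Perm F)) := by
  refine le_normalizer_translations (fun g hg => map_add_of_mem_pstab hadd hg) fun g hg c hc => ?_
  refine apply_mem_closure_of_map_add (map_add_of_mem_pstab hadd hg) (fun s hs => ?_) hc
  exact AddSubgroup.subset_closure (apply_mem_of_mem_pstab hg hs)

theorem pstab_le_normalizer_translations_closure_sub_one
    (hadd : ∀ g ∈ G, g 0 = 0 → ∀ x y, g (x + y) = g x + g y) (hP1 : (1 : F) ∈ P) :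
    pstab G P ≤ normalizer (translations (AddSubgroup.closure {x : F | ∃ a ∈ P, x = a - 1}) :
      Set (Equiv.Perm F)) := by
  refine le_normalizer_translations (fun g hg => map_add_of_mem_pstab hadd hg) fun g hg c hc => ?_
  refine apply_mem_closure_of_map_add (map_add_of_mem_pstab hadd hg) ?_ hc
  rintro _ ⟨a, ha, rfl⟩
  have hsub : g (a - 1) = (g a - 1) - (g 1 - 1) := by
    rw [map_sub_of_map_add (map_add_of_mem_pstab hadd hg)]
    ring
  rw [hsub]
  exact sub_mem (AddSubgroup.subset_closure ⟨_, apply_mem_of_mem_pstab hg ha, rfl⟩)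
    (AddSubgroup.subset_closure ⟨_, apply_mem_of_mem_pstab hg hP1, rfl⟩)

theorem translations_closure_sub_one_le_closure_pstab_kappa
    (h2trans : ∀ x y x' y' : F, x ≠ y → x' ≠ y' → ∃ g ∈ G, g x = x' ∧ g y = y')
    (hadd : ∀ g ∈ G, g 0 = 0 → ∀ x y, g (x + y) = g x + g y)
    (hP0 : ∀ z ∈ P, z ≠ 0) (hP1 : (1 : F) ∈ P)
    (hPblock : ∀ g ∈ G, g 0 = 0 → (⇑g '' P = P ∨ (⇑g '' P) ∩ P = ∅)) :
    translations (AddSubgroup.closure {x : F | ∃ a ∈ P, x = a - 1}) ≤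
      closure ((pstab G P : Set (Equiv.Perm F)) ∪ {kappa F}) := by
  refine translations_closure_le ?_
  rintro _ ⟨a, ha, rfl⟩
  obtain ⟨g, hg, rfl⟩ := exists_mem_pstab_apply_one_eq h2trans hP0 hP1 hPblock ha
  have hcomm : Equiv.addLeft (g 1 - 1) = (kappa F * g * (kappa F)⁻¹ * g⁻¹)⁻¹ := by
    rw [kappa_conj_of_map_add (map_add_of_mem_pstab hadd hg), mul_inv_cancel_right,
      Equiv.neg_addLeft, neg_sub]
  have hgJ : g ∈ closure ((pstab G P : Set (Equiv.Perm F)) ∪ {kappa F}) :=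
    subset_closure (Or.inl hg)
  have hκJ : kappa F ∈ closure ((pstab G P : Set (Equiv.Perm F)) ∪ {kappa F}) :=
    subset_closure (Or.inr rfl)
  rw [hcomm]
  exact inv_mem (mul_mem (mul_mem (mul_mem hκJ hgJ) (inv_mem hκJ)) (inv_mem hgJ))

theorem kappa_mem_normalizer_translations_closure_sub_one_sup_pstab
    (hadd : ∀ g ∈ G, g 0 = 0 → ∀ x y, g (x + y) = g x + g y) (hP1 : (1 : F) ∈ P) :
    kappa F ∈ normalizer ((translations (AddSubgroup.closure {x : F | ∃ a ∈ P, x = a - 1}) ⊔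
      pstab G P : Subgroup (Equiv.Perm F)) : Set (Equiv.Perm F)) := by
  set T := translations (AddSubgroup.closure {x : F | ∃ a ∈ P, x = a - 1})
  refine mem_normalizer_of_mul_self_eq_one kappa_mul_self fun n hn => ?_
  suffices T ⊔ pstab G P ≤ (T ⊔ pstab G P).comap (MulAut.conj (kappa F)).toMonoidHom from this hn
  refine sup_le (fun t ht => ?_) (fun g hg => ?_)
  · obtain ⟨c, hc, rfl⟩ := mem_translations_iff.mp ht
    change kappa F * _ * (kappa F)⁻¹ ∈ T ⊔ pstab G P
    rw [kappa_conj_addLeft]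
    exact mem_sup_left (addLeft_mem_translations (neg_mem hc))
  · change kappa F * _ * (kappa F)⁻¹ ∈ T ⊔ pstab G P
    rw [kappa_conj_of_map_add (map_add_of_mem_pstab hadd hg), ← neg_sub]
    refine mul_mem (mem_sup_left (addLeft_mem_translations (neg_mem ?_))) (mem_sup_right hg)
    exact AddSubgroup.subset_closure ⟨_, apply_mem_of_mem_pstab hg hP1, rfl⟩

theorem neg_mem_pstab_of_kappa_mem_mul {A : AddSubgroup F}
    (h : kappa F ∈ (translations A : Set (Equiv.Perm F)) * pstab G P) :
    Equiv.neg F ∈ pstab G P := by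
  obtain ⟨t, ht, g, hg, hκ⟩ := h
  obtain ⟨c, -, rfl⟩ := mem_translations_iff.mp ht
  have hg' : g = Equiv.addLeft (-c) * kappa F := by
    rw [← hκ, ← mul_assoc, ← Equiv.addLeft_add, neg_add_cancel, Equiv.addLeft_zero, one_mul]
  have hc : c = 1 := by
    have h0 := (mem_pstab_iff.mp hg).2.1
    rw [hg'] at h0
    simpa [neg_add_eq_zero] using h0
  have hneg : g = Equiv.neg F := by
    ext z
    simp [hg', hc]
  exact hneg ▸ hg

theorem closure_pstab_kappa_eq_translations_closure_sup_pstab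
    (h2trans : ∀ x y x' y' : F, x ≠ y → x' ≠ y' → ∃ g ∈ G, g x = x' ∧ g y = y')
    (hadd : ∀ g ∈ G, g 0 = 0 → ∀ x y, g (x + y) = g x + g y)
    (hP0 : ∀ z ∈ P, z ≠ 0) (hP1 : (1 : F) ∈ P)
    (hPblock : ∀ g ∈ G, g 0 = 0 → (⇑g '' P = P ∨ (⇑g '' P) ∩ P = ∅))
    (hneg : Equiv.neg F ∈ pstab G P) :
    closure ((pstab G P : Set (Equiv.Perm F)) ∪ {kappa F}) =
      translations (AddSubgroup.closure P) ⊔ pstab G P := by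
  have hκ : kappa F ∈ translations (AddSubgroup.closure P) ⊔ pstab G P :=
    mul_mem (mem_sup_left (addLeft_mem_translations (AddSubgroup.subset_closure hP1)))
      (mem_sup_right hneg)
  refine le_antisymm ((closure_le _).mpr (Set.union_subset (fun g hg => mem_sup_right hg)
    (Set.singleton_subset_iff.mpr hκ))) (sup_le (translations_closure_le fun b hb => ?_)
    (fun g hg => subset_closure (Or.inl hg)))
  have hsplit : Equiv.addLeft b = Equiv.addLeft (b - 1) * (kappa F * (Equiv.neg F)⁻¹) := by
    rw [kappa_eq_addLeft_one_mul_neg, mul_inv_cancel_right, ← Equiv.addLeft_add, sub_add_cancel]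
  rw [hsplit]
  refine mul_mem ?_ (mul_mem (subset_closure (Or.inr rfl)) (inv_mem (subset_closure (Or.inl hneg))))
  exact translations_closure_sub_one_le_closure_pstab_kappa h2trans hadd hP0 hP1 hPblock
    (addLeft_mem_translations (AddSubgroup.subset_closure ⟨b, hb, rfl⟩))

theorem image_val_comap_pstab {p : ℕ} (hP0 : ∀ z ∈ P, z ≠ 0) (hP1 : (1 : F) ∈ P)
    (hPblock : ∀ g ∈ G, g 0 = 0 → (⇑g '' P = P ∨ (⇑g '' P) ∩ P = ∅)) :
    Units.val '' ((pstab G P).comap (MulAction.toPermHom Fˣ F) : Set Fˣ) =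
      P ∩ {a : F | scalarFrob G p a 0} := by
  ext a
  constructor
  · rintro ⟨u, hu, rfl⟩
    refine ⟨by simpa [Units.smul_def] using apply_mem_of_mem_pstab hu hP1, ?_⟩
    exact ⟨_, (mem_pstab_iff.mp hu).1, fun z => by simp [Units.smul_def]⟩
  · rintro ⟨ha, g, hg, hgz⟩
    have hgu : MulAction.toPermHom Fˣ F (Units.mk0 a (hP0 a ha)) = g := by
      ext z
      simp [hgz, Units.smul_def]
    refine ⟨Units.mk0 a (hP0 a ha), ?_, rfl⟩
    change MulAction.toPermHom Fˣ F _ ∈ pstab G P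
    rw [hgu]
    exact mem_pstab_of_apply_one_mem hP1 hPblock hg (by simp [hgz]) (by simpa [hgz] using ha)

theorem neg_mem_pstab_iff_even_ncard [Finite F] {p : ℕ} (hF : ringChar F ≠ 2)
    (hP0 : ∀ z ∈ P, z ≠ 0) (hP1 : (1 : F) ∈ P)
    (hPblock : ∀ g ∈ G, g 0 = 0 → (⇑g '' P = P ∨ (⇑g '' P) ∩ P = ∅)) :
    Equiv.neg F ∈ pstab G P ↔ Even (P ∩ {a : F | scalarFrob G p a 0}).ncard := by
  have hneg : MulAction.toPermHom Fˣ F (-1) = Equiv.neg F := by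
    ext z
    simp [Units.smul_def]
  rw [← image_val_comap_pstab hP0 hP1 hPblock, Set.ncard_image_of_injective _ Units.val_injective,
    ← Nat.card_coe_set_eq, ← hneg]
  exact Subgroup.neg_one_mem_iff_even_natCard hF ((pstab G P).comap (MulAction.toPermHom Fˣ F))

end Block

theorem stmt_14_general {F : Type*} [Field F] [Fintype F] (p d : ℕ) (hp : p.Prime) (hpodd : Odd p)
    (hcard : Fintype.card F = p ^ d)
    (G : Subgroup (Equiv.Perm F))
    (hAGL : ∀ g ∈ G, ∃ (a c : F) (k : ℕ), ∀ z : F, g z = a * z ^ p ^ k + c)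
    (h2trans : ∀ x y x' y' : F, x ≠ y → x' ≠ y' → ∃ g ∈ G, g x = x' ∧ g y = y')
    (P : Set F) (hP0 : ∀ z ∈ P, z ≠ 0) (hP1 : (1 : F) ∈ P)
    (hPblock : ∀ g ∈ G, g 0 = 0 → (⇑g '' P = P ∨ (⇑g '' P) ∩ P = ∅)) :
    -- the case |K| odd: J = (T₁ ⋊ G_{0,P}) ⋊ ⟨κ⟩
    (Odd (Set.ncard (P ∩ {a : F | scalarFrob G p a 0})) →
      ∃ J₁ : Subgroup (Equiv.Perm F),
        (J₁ : Set (Equiv.Perm F)) =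
          (translations (AddSubgroup.closure {x : F | ∃ a ∈ P, x = a - 1}) :
              Set (Equiv.Perm F)) * (pstab G P : Set (Equiv.Perm F)) ∧
        J₁ ≤ Subgroup.closure ((pstab G P : Set (Equiv.Perm F)) ∪ {kappa F}) ∧
        translations (AddSubgroup.closure {x : F | ∃ a ∈ P, x = a - 1}) ≤ J₁ ∧
        (∀ x ∈ J₁, ∀ t ∈ translations (AddSubgroup.closure {x : F | ∃ a ∈ P, x = a - 1}),
          x * t * x⁻¹ ∈ translations (AddSubgroup.closure {x : F | ∃ a ∈ P, x = a - 1})) ∧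
        ((translations (AddSubgroup.closure {x : F | ∃ a ∈ P, x = a - 1}) :
            Set (Equiv.Perm F)) ∩ (pstab G P : Set (Equiv.Perm F)) = {1}) ∧
        (∀ x ∈ Subgroup.closure ((pstab G P : Set (Equiv.Perm F)) ∪ {kappa F}),
          ∀ y ∈ J₁, x * y * x⁻¹ ∈ J₁) ∧
        kappa F ∉ J₁ ∧
        ((Subgroup.closure ((pstab G P : Set (Equiv.Perm F)) ∪ {kappa F}) :
            Set (Equiv.Perm F)) =
          (J₁ : Set (Equiv.Perm F)) ∪
            (J₁ : Set (Equiv.Perm F)) * ({kappa F} : Set (Equiv.Perm F)))) ∧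
    -- the case |K| even: J = T₂ ⋊ G_{0,P}
    (Even (Set.ncard (P ∩ {a : F | scalarFrob G p a 0})) →
      translations (AddSubgroup.closure P) ≤
        Subgroup.closure ((pstab G P : Set (Equiv.Perm F)) ∪ {kappa F}) ∧
      (∀ x ∈ Subgroup.closure ((pstab G P : Set (Equiv.Perm F)) ∪ {kappa F}),
        ∀ t ∈ translations (AddSubgroup.closure P),
          x * t * x⁻¹ ∈ translations (AddSubgroup.closure P)) ∧
      ((translations (AddSubgroup.closure P) : Set (Equiv.Perm F)) ∩
        (pstab G P : Set (Equiv.Perm F)) = {1}) ∧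
      ((Subgroup.closure ((pstab G P : Set (Equiv.Perm F)) ∪ {kappa F}) :
          Set (Equiv.Perm F)) =
        (translations (AddSubgroup.closure P) : Set (Equiv.Perm F)) *
          (pstab G P : Set (Equiv.Perm F)))) := by
  have := Fact.mk hp
  have := charP_of_card_eq_prime_pow hcard
  have hF : ringChar F ≠ 2 := by
    rw [ringChar.eq F p]; rintro rfl; exact Nat.not_even_iff_odd.mpr hpodd even_two
  have hadd : ∀ g ∈ G, g 0 = 0 → ∀ x y, g (x + y) = g x + g y := fun g hg h0 => by
    obtain ⟨a, c, k, hgz⟩ := hAGL g hg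
    exact map_add_of_affine hgz h0
  have hpstabJ : pstab G P ≤ Subgroup.closure ((pstab G P : Set (Equiv.Perm F)) ∪ {kappa F}) :=
    fun g hg => Subgroup.subset_closure (Or.inl hg)
  rw [← Nat.not_even_iff_odd, ← neg_mem_pstab_iff_even_ncard hF hP0 hP1 hPblock]
  refine ⟨fun hneg => ?_, fun hneg => ?_⟩
  · have hT := pstab_le_normalizer_translations_closure_sub_one hadd hP1
    have hκ := kappa_mem_normalizer_translations_closure_sub_one_sup_pstab hadd hP1
    have hJ := Subgroup.closure_union_singleton_eq_sup_zpowers le_sup_right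
      (sup_le (translations_closure_sub_one_le_closure_pstab_kappa h2trans hadd hP0 hP1 hPblock)
        hpstabJ)
    have hJ₁ := Subgroup.coe_mul_of_right_le_normalizer_left _ _ hT
    refine ⟨_, hJ₁, hJ ▸ le_sup_left, le_sup_left,
      Subgroup.conj_mem_of_le_normalizer (sup_le Subgroup.le_normalizer hT),
      translations_inter_pstab _ G P,
      Subgroup.conj_mem_of_le_normalizer
        (hJ ▸ sup_le Subgroup.le_normalizer (Subgroup.zpowers_le.mpr hκ)),
      fun h => hneg (neg_mem_pstab_of_kappa_mem_mul (by rw [← hJ₁]; exact h)),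
      hJ ▸ Subgroup.coe_sup_zpowers_of_mul_self_eq_one kappa_mul_self hκ⟩
  · have hT := pstab_le_normalizer_translations_closure (P := P) hadd
    rw [closure_pstab_kappa_eq_translations_closure_sup_pstab h2trans hadd hP0 hP1 hPblock hneg]
    exact ⟨le_sup_left, Subgroup.conj_mem_of_le_normalizer (sup_le Subgroup.le_normalizer hT),
      translations_inter_pstab _ G P, Subgroup.coe_mul_of_right_le_normalizer_left _ _ hT⟩

/-- Lemma 3.11: let p be an odd prime, q = p^d, G ≤ AΓL(1,q) 2-transitive on F_q,
H := {a : t(a,0) ∈ G₀}, P an imprimitive block of G₀ on F_q^× with 1 ∈ P, K := P ∩ H,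
T̃₁, T̃₂ the additive subgroups of (F_q,+) generated by {a-1 : a ∈ P} and by P, T_i the
corresponding translation groups, κ : z ↦ -z+1, and J := ⟨G_{0,P}, κ⟩. If |K| is odd
then J = (T₁ ⋊ G_{0,P}) ⋊ ⟨κ⟩; if |K| is even then J = T₂ ⋊ G_{0,P}. -/
theorem stmt_14 {F : Type*} [Field F] [Fintype F] (p d : ℕ) (hp : p.Prime) (hpodd : Odd p)
    (hd : 0 < d) (hcard : Fintype.card F = p ^ d)
    (G : Subgroup (Equiv.Perm F))
    (hAGL : ∀ g ∈ G, ∃ (a c : F) (k : ℕ), ∀ z : F, g z = a * z ^ p ^ k + c)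
    (h2trans : ∀ x y x' y' : F, x ≠ y → x' ≠ y' → ∃ g ∈ G, g x = x' ∧ g y = y')
    (P : Set F) (hP0 : ∀ z ∈ P, z ≠ 0) (hP1 : (1 : F) ∈ P)
    (hPblock : ∀ g ∈ G, g 0 = 0 → (⇑g '' P = P ∨ (⇑g '' P) ∩ P = ∅)) :
    -- the case |K| odd: J = (T₁ ⋊ G_{0,P}) ⋊ ⟨κ⟩
    (Odd (Set.ncard (P ∩ {a : F | scalarFrob G p a 0})) →
      ∃ J₁ : Subgroup (Equiv.Perm F),
        (J₁ : Set (Equiv.Perm F)) =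
          (translations (AddSubgroup.closure {x : F | ∃ a ∈ P, x = a - 1}) :
              Set (Equiv.Perm F)) * (pstab G P : Set (Equiv.Perm F)) ∧
        J₁ ≤ Subgroup.closure ((pstab G P : Set (Equiv.Perm F)) ∪ {kappa F}) ∧
        translations (AddSubgroup.closure {x : F | ∃ a ∈ P, x = a - 1}) ≤ J₁ ∧
        (∀ x ∈ J₁, ∀ t ∈ translations (AddSubgroup.closure {x : F | ∃ a ∈ P, x = a - 1}),
          x * t * x⁻¹ ∈ translations (AddSubgroup.closure {x : F | ∃ a ∈ P, x = a - 1})) ∧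
        ((translations (AddSubgroup.closure {x : F | ∃ a ∈ P, x = a - 1}) :
            Set (Equiv.Perm F)) ∩ (pstab G P : Set (Equiv.Perm F)) = {1}) ∧
        (∀ x ∈ Subgroup.closure ((pstab G P : Set (Equiv.Perm F)) ∪ {kappa F}),
          ∀ y ∈ J₁, x * y * x⁻¹ ∈ J₁) ∧
        kappa F ∉ J₁ ∧
        ((Subgroup.closure ((pstab G P : Set (Equiv.Perm F)) ∪ {kappa F}) :
            Set (Equiv.Perm F)) =
          (J₁ : Set (Equiv.Perm F)) ∪
            (J₁ : Set (Equiv.Perm F)) * ({kappa F} : Set (Equiv.Perm F)))) ∧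
    -- the case |K| even: J = T₂ ⋊ G_{0,P}
    (Even (Set.ncard (P ∩ {a : F | scalarFrob G p a 0})) →
      translations (AddSubgroup.closure P) ≤
        Subgroup.closure ((pstab G P : Set (Equiv.Perm F)) ∪ {kappa F}) ∧
      (∀ x ∈ Subgroup.closure ((pstab G P : Set (Equiv.Perm F)) ∪ {kappa F}),
        ∀ t ∈ translations (AddSubgroup.closure P),
          x * t * x⁻¹ ∈ translations (AddSubgroup.closure P)) ∧
      ((translations (AddSubgroup.closure P) : Set (Equiv.Perm F)) ∩
        (pstab G P : Set (Equiv.Perm F)) = {1}) ∧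
      ((Subgroup.closure ((pstab G P : Set (Equiv.Perm F)) ∪ {kappa F}) :
          Set (Equiv.Perm F)) =
        (translations (AddSubgroup.closure P) : Set (Equiv.Perm F)) *
          (pstab G P : Set (Equiv.Perm F)))) :=
  stmt_14_general p d hp hpodd hcard G hAGL h2trans P hP0 hP1 hPblock
end

section
/- Let p be an odd prime, q = p^d, and let P be a subgroup of the multiplicative group F_q^× of index 2 with |P| > 1. Then the subgroup of the additive group (F_q, +) generated by {a − 1 : a ∈ P} is all of F_q. -/
/-- (From the proof of Lemma 3.11.) Let p be an odd prime, q = p^d, and P ≤ F_q^×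
a subgroup of index 2 with |P| > 1. Then the additive subgroup of (F_q,+) generated
by {a - 1 : a ∈ P} is all of F_q. -/
theorem stmt_15 {F : Type*} [Field F] [Fintype F] (p d : ℕ) (hp : p.Prime) (hpodd : Odd p)
    (hd : 0 < d) (hcard : Fintype.card F = p ^ d)
    (P : Subgroup Fˣ) (hindex : P.index = 2) (hP : 1 < Nat.card P) :
    AddSubgroup.closure ((fun a : Fˣ => (a : F) - 1) '' (P : Set Fˣ)) = ⊤ := by
  set S := AddSubgroup.closure ((fun a : Fˣ => (a : F) - 1) '' (P : Set Fˣ)) with hSdef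
  -- find a nontrivial element of P
  have hPbot : P ≠ ⊥ := by
    intro h
    rw [h] at hP
    simp at hP
  obtain ⟨a0, ha0⟩ := Subgroup.ne_bot_iff_exists_ne_one.mp hPbot
  set x : F := ((a0 : Fˣ) : F) - 1 with hxdef
  have hx : x ≠ 0 := by
    refine sub_ne_zero.mpr fun h => ha0 ?_
    have : (a0 : Fˣ) = 1 := Units.ext (by simpa using h)
    exact Subtype.ext this
  have key : ∀ b : Fˣ, b ∈ P → x * b ∈ S := by
    intro b hb
    have h1 : (((a0 : Fˣ) * b : Fˣ) : F) - 1 ∈ S :=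
      AddSubgroup.subset_closure ⟨(a0 : Fˣ) * b, mul_mem a0.2 hb, rfl⟩
    have h2 : ((b : Fˣ) : F) - 1 ∈ S := AddSubgroup.subset_closure ⟨b, hb, rfl⟩
    have h3 := S.sub_mem h1 h2
    have : x * b = ((((a0 : Fˣ) * b : Fˣ) : F) - 1) - (((b : Fˣ) : F) - 1) := by
      push_cast
      ring
    rw [this]
    exact h3
  -- the set A = {0} ∪ x • P sits inside S
  set A : Set F := insert 0 ((fun b : Fˣ => x * (b : F)) '' (P : Set Fˣ)) with hAdef
  have hAS : A ⊆ (S : Set F) := by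
    rintro y (rfl | ⟨b, hb, rfl⟩)
    · exact S.zero_mem
    · exact key b hb
  have hinj : Function.Injective (fun b : Fˣ => x * (b : F)) := by
    intro b c h
    exact Units.ext (mul_left_cancel₀ hx h)
  have h0A : (0 : F) ∉ (fun b : Fˣ => x * (b : F)) '' (P : Set Fˣ) := by
    rintro ⟨b, hb, h⟩
    exact (mul_ne_zero hx b.ne_zero) h
  have hAcard : A.ncard = Nat.card P + 1 := by
    rw [hAdef, Set.ncard_insert_of_notMem h0A,
      Set.ncard_image_of_injective _ hinj, ← Nat.card_coe_set_eq]
    rfl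
  have hcardS : Nat.card P + 1 ≤ Nat.card S := by
    rw [← hAcard]
    exact (Set.ncard_le_ncard hAS (Set.toFinite _)).trans_eq
      (Nat.card_coe_set_eq _).symm
  -- cardinality facts
  have hcardF : Nat.card F = p ^ d := by rw [Nat.card_eq_fintype_card, hcard]
  have hcardU : Nat.card Fˣ = p ^ d - 1 := by
    rw [Nat.card_units, hcardF]
  have hPcard : Nat.card P * 2 = p ^ d - 1 := by
    rw [← hindex, Subgroup.card_mul_index, hcardU]
  have hdvd : Nat.card S ∣ p ^ d := by
    rw [← hcardF]
    exact AddSubgroup.card_addSubgroup_dvd_card S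
  obtain ⟨k, hk, hkS⟩ := (Nat.dvd_prime_pow hp).mp hdvd
  have hq1 : 1 ≤ p ^ d := Nat.one_le_pow _ _ hp.pos
  have hp3 : 3 ≤ p := by
    have h2 := hp.two_le
    have : p ≠ 2 := by rintro rfl; exact (by decide : ¬ Odd 2) hpodd
    omega
  rcases Nat.lt_or_ge k d with hkd | hkd
  · -- small subgroup: contradiction
    exfalso
    have h3 : Nat.card S * 3 ≤ p ^ d := by
      calc Nat.card S * 3 ≤ Nat.card S * p := Nat.mul_le_mul_left _ hp3
        _ = p ^ (k + 1) := by rw [hkS, ← pow_succ]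
        _ ≤ p ^ d := Nat.pow_le_pow_right hp.pos hkd
    omega
  · have hkd' : k = d := le_antisymm hk hkd
    apply AddSubgroup.eq_top_of_card_eq
    rw [hkS, hkd', hcardF]
end

section
/- Let I be a finite group acting transitively on a set Δ. Suppose H ≤ J ≤ I, J is transitive on Δ, and x, y ∈ Δ are points with J_x ≤ H and J_y ≤ H. Set P := x^H (the H-orbit of x), Q := y^H, and Y := N_I(J). Then there exists σ ∈ Y such that {P^j : j ∈ J}^σ = {Q^j : j ∈ J} if and only if x and y lie in the same orbit of N_Y(H) on Δ. In particular, the two systems of blocks {P^j : j ∈ J} and {Q^j : j ∈ J} are identical if and only if x and y lie in the same orbit of N_J(H) on Δ. -/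
/-!
If `σ` normalizes `J`, the `J`-orbit of the block `σ • x^H` is `σ • {(x^H)^j : j ∈ J}`, so both
questions reduce to finding `σ` (in `N_I(J)`, resp. in `J`) with `σ • x^H = y^H`. The hypothesis
`J_x ≤ H` makes `H` the setwise stabilizer of `x^H` in `J`; hence such a `σ` conjugates `H` onto
the stabilizer of `y^H` in `J`, which is `H` again, so `σ` normalizes `H`. Correcting `σ` by an
element of `H` then moves `x` to `y`.
-/

section

open MulAction Pointwise

variable {G α : Type*} [Group G] [MulAction G α]

lemma setOf_exists_mem_eq_smul_eq_orbit (K : Subgroup G) (a : α) :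
    {b | ∃ g ∈ K, b = g • a} = orbit K a := by
  ext b
  simp [mem_orbit_iff, eq_comm]

lemma orbit_eq_orbit_iff_exists_mem_smul_eq {K : Subgroup G} {a b : α} :
    orbit K a = orbit K b ↔ ∃ g ∈ K, g • a = b := by
  simp only [eq_comm (a := orbit K a), orbit_eq_iff, mem_orbit_iff, Subtype.exists,
    Subgroup.mk_smul, exists_prop]

lemma smul_orbit_eq_orbit_smul_of_mem_normalizer {N : Subgroup G} {g : G}
    (hg : g ∈ Subgroup.normalizer (N : Set G)) (a : α) :
    g • orbit N a = orbit N (g • a) := by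
  ext b
  simp only [Set.mem_smul_set, mem_orbit_iff, Subtype.exists, Subgroup.mk_smul]
  constructor
  · rintro ⟨_, ⟨k, hk, rfl⟩, rfl⟩
    exact ⟨g * k * g⁻¹, (Subgroup.mem_normalizer_iff.1 hg k).1 hk, by simp [mul_smul]⟩
  · rintro ⟨k, hk, rfl⟩
    exact ⟨_, ⟨g⁻¹ * k * g, (Subgroup.mem_normalizer_iff''.1 hg k).1 hk, rfl⟩, by simp [mul_smul]⟩

lemma exists_mem_smul_orbit_eq_orbit_iff {J K : Subgroup G} (hJK : J ≤ K)
    (hK : K ≤ Subgroup.normalizer (J : Set G)) {a b : α} :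
    (∃ g ∈ K, g • orbit J a = orbit J b) ↔ ∃ g ∈ K, g • a = b := by
  constructor
  · rintro ⟨g, hgK, hg⟩
    rw [smul_orbit_eq_orbit_smul_of_mem_normalizer (hK hgK), orbit_eq_iff] at hg
    obtain ⟨⟨j, hj⟩, hjb : j • b = g • a⟩ := hg
    exact ⟨j⁻¹ * g, mul_mem (inv_mem (hJK hj)) hgK, by rw [mul_smul, ← hjb, inv_smul_smul]⟩
  · rintro ⟨g, hgK, rfl⟩
    exact ⟨g, hgK, smul_orbit_eq_orbit_smul_of_mem_normalizer (hK hgK) a⟩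

lemma inf_stabilizer_orbit_eq {H J : Subgroup G} (hHJ : H ≤ J) {x : α}
    (hx : J ⊓ stabilizer G x ≤ H) : J ⊓ stabilizer G (orbit H x) = H := by
  apply le_antisymm
  · intro g hg
    obtain ⟨hgJ, hg⟩ := Subgroup.mem_inf.1 hg
    obtain ⟨⟨h, hh⟩, hgx : h • x = g • x⟩ : g • x ∈ orbit H x := by
      rw [← mem_stabilizer_iff.1 hg]
      exact Set.smul_mem_smul_set (mem_orbit_self x)
    have : h⁻¹ * g ∈ H := hx <| Subgroup.mem_inf.2 ⟨mul_mem (inv_mem (hHJ hh)) hgJ, by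
      rw [mem_stabilizer_iff, mul_smul, ← hgx, inv_smul_smul]⟩
    simpa using mul_mem hh this
  · intro h hh
    refine Subgroup.mem_inf.2 ⟨hHJ hh, ?_⟩
    rw [mem_stabilizer_iff, smul_orbit_eq_orbit_smul_of_mem_normalizer (Subgroup.le_normalizer hh),
      orbit_eq_iff]
    exact ⟨⟨h, hh⟩, rfl⟩

lemma mem_normalizer_of_smul_orbit_eq {H J : Subgroup G} (hHJ : H ≤ J) {x y : α}
    (hx : J ⊓ stabilizer G x ≤ H) (hy : J ⊓ stabilizer G y ≤ H) {g : G}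
    (hg : g ∈ Subgroup.normalizer (J : Set G)) (hxy : g • orbit H x = orbit H y) :
    g ∈ Subgroup.normalizer (H : Set G) := by
  rw [Subgroup.mem_normalizer_iff_map_conj_eq] at hg ⊢
  calc H.map (MulAut.conj g) = (J ⊓ stabilizer G (orbit H x)).map (MulAut.conj g) := by
        rw [inf_stabilizer_orbit_eq hHJ hx]
    _ = J.map (MulAut.conj g) ⊓ (stabilizer G (orbit H x)).map (MulAut.conj g) :=
        Subgroup.map_inf_eq _ _ _ (MulAut.conj g).injective
    _ = J ⊓ stabilizer G (orbit H y) := by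
        rw [hg, ← MulEquiv.toMonoidHom_eq_coe, ← stabilizer_smul_eq_stabilizer_map_conj, hxy]
    _ = H := inf_stabilizer_orbit_eq hHJ hy

lemma exists_mem_smul_orbit_eq_iff {H J K : Subgroup G} (hHJ : H ≤ J) (hHK : H ≤ K)
    (hK : K ≤ Subgroup.normalizer (J : Set G)) {x y : α}
    (hx : J ⊓ stabilizer G x ≤ H) (hy : J ⊓ stabilizer G y ≤ H) :
    (∃ g ∈ K, g • orbit H x = orbit H y) ↔
      ∃ g ∈ Subgroup.normalizer (H : Set G) ⊓ K, g • x = y := by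
  constructor
  · rintro ⟨g, hgK, hg⟩
    have hgH := mem_normalizer_of_smul_orbit_eq hHJ hx hy (hK hgK) hg
    rw [smul_orbit_eq_orbit_smul_of_mem_normalizer hgH, orbit_eq_iff] at hg
    obtain ⟨⟨h, hh⟩, hhy : h • y = g • x⟩ := hg
    refine ⟨h⁻¹ * g, Subgroup.mem_inf.2 ⟨?_, ?_⟩, by rw [mul_smul, ← hhy, inv_smul_smul]⟩
    · exact mul_mem (inv_mem (Subgroup.le_normalizer hh)) hgH
    · exact mul_mem (inv_mem (hHK hh)) hgK
  · rintro ⟨g, hg, rfl⟩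
    obtain ⟨hgH, hgK⟩ := Subgroup.mem_inf.1 hg
    exact ⟨g, hgK, smul_orbit_eq_orbit_smul_of_mem_normalizer hgH x⟩

end

theorem stmt_16_general {I : Type*} [Group I] {Δ : Type*} [MulAction I Δ]
    (H J : Subgroup I) (hHJ : H ≤ J)
    (x y : Δ)
    (hJx : ∀ g ∈ J, g • x = x → g ∈ H)
    (hJy : ∀ g ∈ J, g • y = y → g ∈ H) :
    ((∃ σ ∈ Subgroup.normalizer (J : Set I),
        (fun S : Set Δ => (fun z => σ • z) '' S) ''
            {S : Set Δ | ∃ j ∈ J, S = (fun z => j • z) '' {z | ∃ h ∈ H, z = h • x}} =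
          {S : Set Δ | ∃ j ∈ J, S = (fun z => j • z) '' {z | ∃ h ∈ H, z = h • y}}) ↔
      ∃ ν ∈ Subgroup.normalizer (H : Set I) ⊓ Subgroup.normalizer (J : Set I), ν • x = y) ∧
    (({S : Set Δ | ∃ j ∈ J, S = (fun z => j • z) '' {z | ∃ h ∈ H, z = h • x}} =
        {S : Set Δ | ∃ j ∈ J, S = (fun z => j • z) '' {z | ∃ h ∈ H, z = h • y}}) ↔
      ∃ ν ∈ Subgroup.normalizer (H : Set I) ⊓ J, ν • x = y) := by
  have hx : J ⊓ MulAction.stabilizer I x ≤ H := fun g hg => hJx g (Subgroup.mem_inf.1 hg).1 hg.2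
  have hy : J ⊓ MulAction.stabilizer I y ≤ H := fun g hg => hJy g (Subgroup.mem_inf.1 hg).1 hg.2
  open Pointwise in
  simp only [Set.image_smul, setOf_exists_mem_eq_smul_eq_orbit]
  constructor
  · rw [exists_mem_smul_orbit_eq_orbit_iff Subgroup.le_normalizer le_rfl]
    exact exists_mem_smul_orbit_eq_iff hHJ (hHJ.trans Subgroup.le_normalizer) le_rfl hx hy
  · rw [orbit_eq_orbit_iff_exists_mem_smul_eq]
    exact exists_mem_smul_orbit_eq_iff hHJ hHJ Subgroup.le_normalizer hx hy

/-- Lemma 4.14: Let I be a finite group acting transitively on Δ, H ≤ J ≤ I with J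
transitive on Δ, and x, y ∈ Δ with J_x ≤ H and J_y ≤ H. Set P := x^H, Q := y^H and
Y := N_I(J). Then there exists σ ∈ Y with (P^J)^σ = Q^J iff x and y are in the same
N_Y(H)-orbit on Δ; in particular P^J = Q^J iff x and y are in the same N_J(H)-orbit. -/
theorem stmt_16 {I : Type*} [Group I] [Finite I] {Δ : Type*} [MulAction I Δ]
    (htrans : ∀ a b : Δ, ∃ g : I, g • a = b)
    (H J : Subgroup I) (hHJ : H ≤ J)
    (hJtrans : ∀ a b : Δ, ∃ j ∈ J, j • a = b)
    (x y : Δ)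
    (hJx : ∀ g ∈ J, g • x = x → g ∈ H)
    (hJy : ∀ g ∈ J, g • y = y → g ∈ H) :
    ((∃ σ ∈ Subgroup.normalizer (J : Set I),
        (fun S : Set Δ => (fun z => σ • z) '' S) ''
            {S : Set Δ | ∃ j ∈ J, S = (fun z => j • z) '' {z | ∃ h ∈ H, z = h • x}} =
          {S : Set Δ | ∃ j ∈ J, S = (fun z => j • z) '' {z | ∃ h ∈ H, z = h • y}}) ↔
      ∃ ν ∈ Subgroup.normalizer (H : Set I) ⊓ Subgroup.normalizer (J : Set I), ν • x = y) ∧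
    (({S : Set Δ | ∃ j ∈ J, S = (fun z => j • z) '' {z | ∃ h ∈ H, z = h • x}} =
        {S : Set Δ | ∃ j ∈ J, S = (fun z => j • z) '' {z | ∃ h ∈ H, z = h • y}}) ↔
      ∃ ν ∈ Subgroup.normalizer (H : Set I) ⊓ J, ν • x = y) :=
  stmt_16_general H J hHJ x y hJx hJy
end
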